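/- arXiv:1807.06910 — 5 statements merged into one kernel-verified Lean document; each statement's English description precedes it below -/
import Mathlib

section
/- Let G be a snake graph with d tiles, let Ω be as in the context, and let P_0 be a fixed perfect matching of G (in particular one may take P_0 to be the maximal matching P_+ or the minimal matching P_−). Then there exists a unique function v from the set of perfect matchings of G to ℤ such that v(P_0) = 0 and v(P) − v(μ_i P) = Ω(i, P) for every perfect matching P of G that can twist on a tile G_i. -/
/-- An edge of the integer lattice: `(p, true)` is the horizontal unit segment
from `p` to `p + (1, 0)`, and `(p, false)` is the vertical unit segment from
`p` to `p + (0, 1)`. -/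
abbrev LatticeEdge : Type := (ℤ × ℤ) × Bool

/-- A lattice edge is horizontal if it is parallel to the x-axis. -/
def IsHorizontalEdge (e : LatticeEdge) : Prop := e.2 = true

/-- A lattice edge is vertical if it is parallel to the y-axis. -/
def IsVerticalEdge (e : LatticeEdge) : Prop := e.2 = false

/-- The two endpoints of a lattice edge. -/
def endpointsOf (e : LatticeEdge) : Set (ℤ × ℤ) :=
  if e.2 then {e.1, (e.1.1 + 1, e.1.2)} else {e.1, (e.1.1, e.1.2 + 1)}

/-- The south side of the unit tile with lower-left corner `c`. -/
def southSide (c : ℤ × ℤ) : LatticeEdge := (c, true)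

/-- The north side of the unit tile with lower-left corner `c`. -/
def northSide (c : ℤ × ℤ) : LatticeEdge := ((c.1, c.2 + 1), true)

/-- The west side of the unit tile with lower-left corner `c`. -/
def westSide (c : ℤ × ℤ) : LatticeEdge := (c, false)

/-- The east side of the unit tile with lower-left corner `c`. -/
def eastSide (c : ℤ × ℤ) : LatticeEdge := ((c.1 + 1, c.2), false)

/-- The four sides of the unit tile with lower-left corner `c`. -/
def tileSides (c : ℤ × ℤ) : Set LatticeEdge :=
  {southSide c, northSide c, westSide c, eastSide c}

/-- The four corners of the unit tile with lower-left corner `c`. -/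
def tileCorners (c : ℤ × ℤ) : Set (ℤ × ℤ) :=
  {c, (c.1 + 1, c.2), (c.1, c.2 + 1), (c.1 + 1, c.2 + 1)}

/-- A snake graph with `d ≥ 1` tiles: tile `1` has lower-left corner `(0, 0)`,
and each subsequent tile is the translate of the previous one by one unit to
the right or one unit up.  Tiles are indexed `1, …, d`; `corner i` is the
lower-left corner of tile `i`. -/
structure SnakeGraph where
  d : ℕ
  one_le_d : 1 ≤ d
  corner : ℕ → ℤ × ℤ
  corner_one : corner 1 = (0, 0)
  corner_succ : ∀ i, 1 ≤ i → i < d →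
    corner (i + 1) = ((corner i).1 + 1, (corner i).2) ∨
      corner (i + 1) = ((corner i).1, (corner i).2 + 1)

namespace SnakeGraph

/-- The set of sides of tile `i` of `G`. -/
def tile (G : SnakeGraph) (i : ℕ) : Set LatticeEdge := tileSides (G.corner i)

/-- The edge set of (the graph of) `G`: all sides of all tiles. -/
def edges (G : SnakeGraph) : Set LatticeEdge := ⋃ i ∈ Set.Icc 1 G.d, G.tile i

/-- The vertex set of `G`: all corners of all tiles. -/
def vertices (G : SnakeGraph) : Set (ℤ × ℤ) :=
  ⋃ i ∈ Set.Icc 1 G.d, tileCorners (G.corner i)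

/-- A perfect matching of `G`: a set of edges of `G` such that every vertex of
`G` is incident to exactly one edge of the set. -/
def IsPerfectMatching (G : SnakeGraph) (P : Set LatticeEdge) : Prop :=
  P ⊆ G.edges ∧ ∀ v ∈ G.vertices, ∃! e, e ∈ P ∧ v ∈ endpointsOf e

/-- `P` can twist on tile `i` if two of the four sides of tile `i` belong to `P`. -/
def CanTwist (G : SnakeGraph) (P : Set LatticeEdge) (i : ℕ) : Prop :=
  1 ≤ i ∧ i ≤ G.d ∧ (P ∩ G.tile i).ncard = 2

/-- The twist of `P` on tile `i`: replace the sides of tile `i` belonging to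
`P` by the other sides of tile `i`. -/
def twist (G : SnakeGraph) (i : ℕ) (P : Set LatticeEdge) : Set LatticeEdge :=
  (P \ G.tile i) ∪ (G.tile i \ P)

/-- A boundary edge of `G`: an edge which is a side of exactly one tile. -/
def IsBoundaryEdge (G : SnakeGraph) (e : LatticeEdge) : Prop :=
  ∃! i, (1 ≤ i ∧ i ≤ G.d) ∧ e ∈ G.tile i

/-- `P` is the minimal matching `P₋` of `G`: the perfect matching consisting
only of boundary edges which contains no vertical side of tile `1`. -/
def IsMinimalMatching (G : SnakeGraph) (P : Set LatticeEdge) : Prop :=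
  G.IsPerfectMatching P ∧ (∀ e ∈ P, G.IsBoundaryEdge e) ∧
    ∀ e ∈ P ∩ G.tile 1, IsHorizontalEdge e

/-- `P` is the maximal matching `P₊` of `G`: the perfect matching consisting
only of boundary edges other than the minimal one, i.e. the one containing a
vertical side of tile `1`. -/
def IsMaximalMatching (G : SnakeGraph) (P : Set LatticeEdge) : Prop :=
  G.IsPerfectMatching P ∧ (∀ e ∈ P, G.IsBoundaryEdge e) ∧
    ∃ e ∈ P ∩ G.tile 1, IsVerticalEdge e

/-- `G` is a straight snake graph: every tile is the translate of the previous
one by one unit to the right. -/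
def IsStraight (G : SnakeGraph) : Prop :=
  ∀ i, 1 ≤ i → i < G.d → G.corner (i + 1) = ((G.corner i).1 + 1, (G.corner i).2)

end SnakeGraph

----------------------------------------------------------------
namespace SGAux
open SnakeGraph

variable (G : SnakeGraph)

/-- the vertex just right of the lower-left corner of tile ℓ -/
def vA (ℓ : ℕ) : ℤ × ℤ := ((G.corner ℓ).1 + 1, (G.corner ℓ).2)
/-- the vertex just above the lower-left corner of tile ℓ -/
def vB (ℓ : ℕ) : ℤ × ℤ := ((G.corner ℓ).1, (G.corner ℓ).2 + 1)
/-- the top-right vertex of the last tile -/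
def top : ℤ × ℤ := ((G.corner G.d).1 + 1, (G.corner G.d).2 + 1)
def vert (ℓ : ℕ) (t : Bool) : ℤ × ℤ := if t then vB G ℓ else vA G ℓ
/-- whether step ℓ → ℓ+1 is to the right -/
def pol (i : ℕ) : Bool := decide ((G.corner (i+1)).1 = (G.corner i).1 + 1)

def vsum (p : ℤ × ℤ) : ℤ := p.1 + p.2
def upperE (e : LatticeEdge) : ℤ × ℤ :=
  if e.2 then (e.1.1 + 1, e.1.2) else (e.1.1, e.1.2 + 1)

lemma endpointsOf_eq (e : LatticeEdge) : endpointsOf e = {e.1, upperE e} := by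
  cases e with
  | mk p b => cases b <;> simp [endpointsOf, upperE]

lemma mem_endpointsOf {v : ℤ × ℤ} {e : LatticeEdge} :
    v ∈ endpointsOf e ↔ v = e.1 ∨ v = upperE e := by
  rw [endpointsOf_eq]; simp

lemma upperE_ne (e : LatticeEdge) : upperE e ≠ e.1 := by
  cases e with
  | mk p b =>
    cases b <;> simp [upperE, Prod.ext_iff] <;> omega

lemma vsum_upperE (e : LatticeEdge) : vsum (upperE e) = vsum e.1 + 1 := by
  cases e with
  | mk p b => cases b <;> simp [upperE, vsum] <;> ring

lemma step (i : ℕ) (h1 : 1 ≤ i) (h2 : i < G.d) :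
    G.corner (i+1) = (if pol G i then ((G.corner i).1 + 1, (G.corner i).2)
      else ((G.corner i).1, (G.corner i).2 + 1)) := by
  rcases G.corner_succ i h1 h2 with h | h
  · rw [h]; simp [pol, h]
  · rw [h]; simp only [pol, h]
    have : (G.corner i).1 ≠ (G.corner i).1 + 1 := by omega
    simp [this]

lemma csum (i : ℕ) (h1 : 1 ≤ i) (h2 : i ≤ G.d) :
    vsum (G.corner i) = (i : ℤ) - 1 := by
  induction i with
  | zero => omega
  | succ n ih =>
    rcases Nat.eq_or_lt_of_le h1 with h | h
    · simp [← h, G.corner_one, vsum]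
    · have hn1 : 1 ≤ n := by omega
      have hnd : n < G.d := by omega
      have := ih hn1 (by omega)
      rcases G.corner_succ n hn1 hnd with hs | hs <;>
        · rw [hs] at *; simp [vsum] at *; push_cast; omega

lemma vsum_vA (ℓ : ℕ) (h1 : 1 ≤ ℓ) (h2 : ℓ ≤ G.d) : vsum (vA G ℓ) = (ℓ : ℤ) := by
  have := csum G ℓ h1 h2; simp [vA, vsum] at *; omega

lemma vsum_vB (ℓ : ℕ) (h1 : 1 ≤ ℓ) (h2 : ℓ ≤ G.d) : vsum (vB G ℓ) = (ℓ : ℤ) := by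
  have := csum G ℓ h1 h2; simp [vB, vsum] at *; omega

lemma vsum_vert (ℓ : ℕ) (t : Bool) (h1 : 1 ≤ ℓ) (h2 : ℓ ≤ G.d) :
    vsum (vert G ℓ t) = (ℓ : ℤ) := by
  cases t <;> simp [vert, vsum_vA G ℓ h1 h2, vsum_vB G ℓ h1 h2]

lemma vsum_top : vsum (top G) = (G.d : ℤ) + 1 := by
  have := csum G G.d G.one_le_d le_rfl; simp [top, vsum] at *; omega

lemma vA_ne_vB (ℓ : ℕ) : vA G ℓ ≠ vB G ℓ := by
  intro h
  have h1 := congrArg Prod.fst h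
  simp only [vA, vB] at h1
  omega

lemma vert_inj {ℓ : ℕ} {t s : Bool} (h : vert G ℓ t = vert G ℓ s) : t = s := by
  have := vA_ne_vB G ℓ
  cases t <;> cases s <;> simp_all [vert, vA, vB, Prod.ext_iff] <;> omega

end SGAux

namespace SGAux
open SnakeGraph
variable (G : SnakeGraph)

lemma mem_vertices_iff {p : ℤ × ℤ} :
    p ∈ G.vertices ↔ ∃ i, 1 ≤ i ∧ i ≤ G.d ∧ p ∈ tileCorners (G.corner i) := by
  simp [SnakeGraph.vertices, Set.mem_Icc]
  constructor
  · rintro ⟨i, ⟨h1, h2⟩, h3⟩; exact ⟨i, h1, h2, h3⟩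
  · rintro ⟨i, h1, h2, h3⟩; exact ⟨i, ⟨h1, h2⟩, h3⟩

lemma mem_tileCorners {p c : ℤ × ℤ} :
    p ∈ tileCorners c ↔ p = c ∨ p = (c.1 + 1, c.2) ∨ p = (c.1, c.2 + 1) ∨ p = (c.1 + 1, c.2 + 1) := by
  simp [tileCorners]

lemma mem_edges_iff {e : LatticeEdge} :
    e ∈ G.edges ↔ ∃ i, 1 ≤ i ∧ i ≤ G.d ∧ e ∈ tileSides (G.corner i) := by
  simp [SnakeGraph.edges, SnakeGraph.tile, Set.mem_Icc]
  constructor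
  · rintro ⟨i, ⟨h1, h2⟩, h3⟩; exact ⟨i, h1, h2, h3⟩
  · rintro ⟨i, h1, h2, h3⟩; exact ⟨i, ⟨h1, h2⟩, h3⟩

lemma mem_tileSides {e : LatticeEdge} {c : ℤ × ℤ} :
    e ∈ tileSides c ↔ e = southSide c ∨ e = northSide c ∨ e = westSide c ∨ e = eastSide c := by
  simp [tileSides]

/-- classification of vertices by the structure of the snake -/
lemma vertex_forms {p : ℤ × ℤ} (hp : p ∈ G.vertices) :
    p = (0, 0) ∨ (∃ ℓ, 1 ≤ ℓ ∧ ℓ ≤ G.d ∧ (p = vA G ℓ ∨ p = vB G ℓ)) ∨ p = top G := by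
  rw [mem_vertices_iff] at hp
  obtain ⟨i, h1, h2, hm⟩ := hp
  rw [mem_tileCorners] at hm
  rcases hm with h | h | h | h
  · -- p = corner i
    rcases Nat.eq_or_lt_of_le h1 with e | lt
    · left; rw [h, ← e, G.corner_one]
    · right; left
      refine ⟨i - 1, by omega, by omega, ?_⟩
      have hs := step G (i-1) (by omega) (by omega)
      have hi : (i - 1) + 1 = i := by omega
      rw [hi] at hs
      cases hpol : pol G (i-1) <;> rw [hpol] at hs <;> simp at hs
      · right; rw [h, hs]; rfl
      · left; rw [h, hs]; rfl
  · right; left; exact ⟨i, h1, h2, Or.inl (by rw [h]; rfl)⟩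
  · right; left; exact ⟨i, h1, h2, Or.inr (by rw [h]; rfl)⟩
  · -- p = corner i + (1,1)
    rcases Nat.eq_or_lt_of_le h2 with e | lt
    · right; right; rw [h, e]; rfl
    · right; left
      refine ⟨i + 1, by omega, by omega, ?_⟩
      have hs := step G i h1 (by omega)
      cases hpol : pol G i <;> rw [hpol] at hs <;> simp at hs
      · left; rw [h]; simp [vA, hs]
      · right; rw [h]; simp [vB, hs]

lemma corner_mem_vertices (i : ℕ) (h1 : 1 ≤ i) (h2 : i ≤ G.d) :
    G.corner i ∈ G.vertices := by
  rw [mem_vertices_iff]; exact ⟨i, h1, h2, by rw [mem_tileCorners]; tauto⟩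

lemma vA_mem_vertices (ℓ : ℕ) (h1 : 1 ≤ ℓ) (h2 : ℓ ≤ G.d) : vA G ℓ ∈ G.vertices := by
  rw [mem_vertices_iff]
  exact ⟨ℓ, h1, h2, by rw [mem_tileCorners]; right; left; rfl⟩

lemma vB_mem_vertices (ℓ : ℕ) (h1 : 1 ≤ ℓ) (h2 : ℓ ≤ G.d) : vB G ℓ ∈ G.vertices := by
  rw [mem_vertices_iff]
  exact ⟨ℓ, h1, h2, by rw [mem_tileCorners]; right; right; left; rfl⟩

lemma top_mem_vertices : top G ∈ G.vertices := by
  rw [mem_vertices_iff]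
  exact ⟨G.d, G.one_le_d, le_rfl, by rw [mem_tileCorners]; right; right; right; rfl⟩

lemma origin_mem_vertices : (0, 0) ∈ G.vertices := by
  have := corner_mem_vertices G 1 le_rfl G.one_le_d
  rwa [G.corner_one] at this

/-- sums of vertices lie in [0, d+1] -/
lemma vertex_vsum_range {p : ℤ × ℤ} (hp : p ∈ G.vertices) :
    0 ≤ vsum p ∧ vsum p ≤ (G.d : ℤ) + 1 := by
  rcases vertex_forms G hp with h | ⟨ℓ, h1, h2, h | h⟩ | h
  · simp [h, vsum]; omega
  · rw [h, vsum_vA G ℓ h1 h2]; omega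
  · rw [h, vsum_vB G ℓ h1 h2]; omega
  · rw [h, vsum_top]; omega

/-- a vertex of sum ℓ ∈ [1,d] is vA ℓ or vB ℓ -/
lemma vertex_of_vsum {p : ℤ × ℤ} (hp : p ∈ G.vertices) {ℓ : ℕ} (h1 : 1 ≤ ℓ) (h2 : ℓ ≤ G.d)
    (hs : vsum p = (ℓ : ℤ)) : p = vA G ℓ ∨ p = vB G ℓ := by
  rcases vertex_forms G hp with h | ⟨m, m1, m2, h | h⟩ | h
  · rw [h] at hs; simp [vsum] at hs; omega
  · rw [h] at hs ⊢; rw [vsum_vA G m m1 m2] at hs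
    have : m = ℓ := by omega
    rw [this] at *; tauto
  · rw [h] at hs ⊢; rw [vsum_vB G m m1 m2] at hs
    have : m = ℓ := by omega
    rw [this] at *; tauto
  · rw [h, vsum_top] at hs; omega

lemma vertex_of_vsum_zero {p : ℤ × ℤ} (hp : p ∈ G.vertices) (hs : vsum p = 0) :
    p = (0, 0) := by
  rcases vertex_forms G hp with h | ⟨m, m1, m2, h | h⟩ | h
  · exact h
  · rw [h, vsum_vA G m m1 m2] at hs; omega
  · rw [h, vsum_vB G m m1 m2] at hs; omega
  · rw [h, vsum_top] at hs; omega

lemma vertex_of_vsum_topv {p : ℤ × ℤ} (hp : p ∈ G.vertices) (hs : vsum p = (G.d : ℤ) + 1) :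
    p = top G := by
  rcases vertex_forms G hp with h | ⟨m, m1, m2, h | h⟩ | h
  · rw [h] at hs; simp [vsum] at hs; omega
  · rw [h, vsum_vA G m m1 m2] at hs; omega
  · rw [h, vsum_vB G m m1 m2] at hs; omega
  · exact h

/-- the endpoints of each edge of G are vertices of G -/
lemma edge_endpoints_mem {e : LatticeEdge} (he : e ∈ G.edges) :
    e.1 ∈ G.vertices ∧ upperE e ∈ G.vertices := by
  rw [mem_edges_iff] at he
  obtain ⟨i, h1, h2, hm⟩ := he
  rw [mem_tileSides] at hm
  have hmem : ∀ q ∈ tileCorners (G.corner i), q ∈ G.vertices := by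
    intro q hq; rw [mem_vertices_iff]; exact ⟨i, h1, h2, hq⟩
  rcases hm with h | h | h | h <;> rw [h] <;>
    constructor <;> apply hmem <;> rw [mem_tileCorners] <;>
    simp [southSide, northSide, westSide, eastSide, upperE, vA, vB] <;> tauto

end SGAux

namespace SGAux
open SnakeGraph
variable (G : SnakeGraph)

def lo (h : ℕ → Bool) (ℓ : ℕ) : ℤ × ℤ := if ℓ = 0 then (0, 0) else vert G ℓ (h ℓ)
def hi (h : ℕ → Bool) (ℓ : ℕ) : ℤ × ℤ := if ℓ = G.d + 1 then top G else vert G ℓ (!(h ℓ))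
def seqEdge (h : ℕ → Bool) (ℓ : ℕ) : LatticeEdge :=
  (lo G h ℓ, decide ((lo G h ℓ).2 = (hi G h (ℓ+1)).2))
def mset (h : ℕ → Bool) : Set LatticeEdge := {e | ∃ ℓ, ℓ ≤ G.d ∧ seqEdge G h ℓ = e}
def OK (h : ℕ → Bool) : Prop :=
  (∀ i, ¬(1 ≤ i ∧ i ≤ G.d) → h i = false) ∧
  ∀ i, 1 ≤ i → i + 1 ≤ G.d → ¬(h i = pol G i ∧ h (i+1) = pol G i)

lemma seqEdge_fst (h : ℕ → Bool) (ℓ : ℕ) : (seqEdge G h ℓ).1 = lo G h ℓ := rfl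

lemma upperE_mk {x y : ℤ × ℤ} (h : y = (x.1 + 1, x.2) ∨ y = (x.1, x.2 + 1)) :
    upperE (x, decide (x.2 = y.2)) = y := by
  have hne : ¬ (x.2 = x.2 + 1) := by omega
  rcases h with h | h <;> rw [h] <;> simp [upperE, hne]

lemma vsum_lo (h : ℕ → Bool) (ℓ : ℕ) (hd : ℓ ≤ G.d) : vsum (lo G h ℓ) = (ℓ : ℤ) := by
  by_cases h0 : ℓ = 0
  · simp [lo, h0, vsum]
  · rw [lo, if_neg h0, vsum_vert G ℓ _ (by omega) hd]

lemma vsum_hi (h : ℕ → Bool) (ℓ : ℕ) (h1 : 1 ≤ ℓ) (h2 : ℓ ≤ G.d + 1) :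
    vsum (hi G h ℓ) = (ℓ : ℤ) := by
  by_cases h0 : ℓ = G.d + 1
  · rw [hi, if_pos h0, vsum_top, h0]; push_cast; ring
  · rw [hi, if_neg h0, vsum_vert G ℓ _ (by omega) (by omega)]

/-- the two endpoints of the level-ℓ edge are one unit apart -/
lemma seq_step (h : ℕ → Bool) (hOK : OK G h) (ℓ : ℕ) (hd : ℓ ≤ G.d) :
    hi G h (ℓ+1) = ((lo G h ℓ).1 + 1, (lo G h ℓ).2) ∨
      hi G h (ℓ+1) = ((lo G h ℓ).1, (lo G h ℓ).2 + 1) := by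
  have hd1 : G.d ≥ 1 := G.one_le_d
  by_cases h0 : ℓ = 0
  · subst h0
    have h1 : (1 : ℕ) ≠ G.d + 1 := by omega
    rw [lo, if_pos rfl, hi, if_neg h1]
    cases hh : h 1 <;> simp [hh, vert, vA, vB, G.corner_one, Prod.ext_iff]
  · have hℓ1 : 1 ≤ ℓ := by omega
    rw [lo, if_neg h0]
    by_cases hde : ℓ = G.d
    · subst hde
      rw [hi, if_pos rfl]
      cases hh : h G.d <;> simp [hh, vert, top, vA, vB, Prod.ext_iff]
    · have hlt : ℓ < G.d := by omega
      have hne : ℓ + 1 ≠ G.d + 1 := by omega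
      rw [hi, if_neg hne]
      have hs := step G ℓ hℓ1 hlt
      have hcon := hOK.2 ℓ hℓ1 (by omega)
      cases hpol : pol G ℓ <;> rw [hpol] at hs hcon <;> simp at hs <;>
        cases hh : h ℓ <;> cases hh1 : h (ℓ+1) <;>
          simp [hh, hh1] at hcon ⊢ <;>
          simp [vert, vA, vB, hs, Prod.ext_iff]

/-- the "left" edge of tile i, when i can flip -/
lemma seq_left (h : ℕ → Bool) (i : ℕ) (h1 : 1 ≤ i) (h2 : i ≤ G.d)
    (hfl : i = 1 ∨ h (i-1) ≠ pol G (i-1)) :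
    seqEdge G h (i-1) = if h i then southSide (G.corner i) else westSide (G.corner i) := by
  have hd1 : G.d ≥ 1 := G.one_le_d
  rcases Nat.eq_or_lt_of_le h1 with he | hlt
  · -- i = 1
    subst he
    have h1n : (1:ℕ) ≠ G.d + 1 := by omega
    rw [seqEdge]
    norm_num
    rw [lo, if_pos rfl, hi, if_neg h1n]
    cases hh : h 1 <;>
      simp [vert, vA, vB, G.corner_one, southSide, westSide]
  · have hi2 : 2 ≤ i := hlt
    have hfl' : h (i-1) ≠ pol G (i-1) := by
      rcases hfl with he | hne
      · omega
      · exact hne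
    have hstep := step G (i-1) (by omega) (by omega)
    have hii : (i - 1) + 1 = i := by omega
    rw [hii] at hstep
    have h1n : i - 1 ≠ 0 := by omega
    have h2n : i ≠ G.d + 1 := by omega
    rw [seqEdge, lo, if_neg h1n, hii, hi, if_neg h2n]
    cases hpol : pol G (i-1) <;> rw [hpol] at hstep hfl' <;> simp at hstep <;>
      have hh' : h (i-1) = !(pol G (i-1)) := by
        rw [hpol]; revert hfl'; cases h (i-1) <;> simp [hpol]
    all_goals rw [hpol] at hh'; simp at hh'
    all_goals cases hh : h i <;>
      simp [hh', hh, vert, vA, vB, hstep, southSide, westSide, Prod.ext_iff]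

/-- the "right" edge of tile i, when i can flip -/
lemma seq_right (h : ℕ → Bool) (i : ℕ) (h1 : 1 ≤ i) (h2 : i ≤ G.d)
    (hfr : i = G.d ∨ h (i+1) ≠ pol G i) :
    seqEdge G h i = if h i then northSide (G.corner i) else eastSide (G.corner i) := by
  have h1n : i ≠ 0 := by omega
  have hhi : hi G h (i+1) = ((G.corner i).1 + 1, (G.corner i).2 + 1) := by
    by_cases hde : i = G.d
    · rw [hi, if_pos (by omega), top, hde]
    · have hlt : i < G.d := by omega
      rcases hfr with he | hne
      · omega
      have hstep := step G i h1 hlt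
      rw [hi, if_neg (by omega)]
      have hh' : (!(h (i+1))) = pol G i := by
        cases hx : h (i+1) <;> cases hy : pol G i <;> simp_all
      rw [hh']
      cases hpol : pol G i <;> rw [hpol] at hstep <;> simp at hstep <;>
        simp [vert, vA, vB, hstep]
  rw [seqEdge, lo, if_neg h1n, hhi]
  cases hh : h i <;>
    simp [vert, vA, vB, northSide, eastSide, Prod.ext_iff]

end SGAux

namespace SGAux
open SnakeGraph
variable (G : SnakeGraph)

lemma mem_tileSides_fst {e : LatticeEdge} {c : ℤ × ℤ} (h : e ∈ tileSides c) :
    e.1 = c ∨ e.1 = (c.1, c.2 + 1) ∨ e.1 = (c.1 + 1, c.2) := by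
  rw [mem_tileSides] at h
  rcases h with h | h | h | h <;> rw [h] <;>
    simp [southSide, northSide, westSide, eastSide] <;> tauto

/-- any matching edge lying on tile i has level i-1 or i -/
lemma seq_level (h : ℕ → Bool) {ℓ i : ℕ} (hd : ℓ ≤ G.d) (h1 : 1 ≤ i) (h2 : i ≤ G.d)
    (hm : seqEdge G h ℓ ∈ tileSides (G.corner i)) : ℓ = i - 1 ∨ ℓ = i := by
  have hs : vsum (seqEdge G h ℓ).1 = (ℓ : ℤ) := by
    rw [seqEdge_fst]; exact vsum_lo G h ℓ hd
  have hc := csum G i h1 h2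
  rcases mem_tileSides_fst hm with hf | hf | hf <;> rw [hf] at hs
  · rw [hc] at hs; omega
  · simp [vsum] at hs hc; omega
  · simp [vsum] at hs hc; omega

lemma seq_right_blocked (h : ℕ → Bool) (hOK : OK G h) (i : ℕ) (h1 : 1 ≤ i) (hlt : i < G.d)
    (hb : h (i+1) = pol G i) : seqEdge G h i ∉ tileSides (G.corner i) := by
  have hcon := hOK.2 i h1 (by omega)
  have hh : h i = (!(pol G i)) := by
    cases hx : h i <;> cases hy : pol G i <;> simp_all
  have hstep := step G i h1 hlt
  have h1n : i ≠ 0 := by omega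
  have h2n : i + 1 ≠ G.d + 1 := by omega
  rw [seqEdge, lo, if_neg h1n, hi, if_neg h2n, hb]
  intro hmem
  rw [mem_tileSides] at hmem
  cases hpol : pol G i <;> rw [hpol] at hstep hh <;> simp at hstep hh <;>
    simp [hpol, vert, vA, vB, hstep, hh, southSide, northSide, westSide, eastSide,
      Prod.ext_iff] at hmem <;>
    omega

lemma seq_left_blocked (h : ℕ → Bool) (hOK : OK G h) (i : ℕ) (h1 : 2 ≤ i) (h2 : i ≤ G.d)
    (hb : h (i-1) = pol G (i-1)) : seqEdge G h (i-1) ∉ tileSides (G.corner i) := by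
  have hcon := hOK.2 (i-1) (by omega) (by omega)
  have hii : (i - 1) + 1 = i := by omega
  rw [hii] at hcon
  have hh : h i = (!(pol G (i-1))) := by
    rw [hb] at hcon
    cases hx : h i <;> cases hy : pol G (i-1) <;> simp_all
  have hstep := step G (i-1) (by omega) (by omega)
  rw [hii] at hstep
  have h1n : i - 1 ≠ 0 := by omega
  have h2n : i ≠ G.d + 1 := by omega
  rw [seqEdge, lo, if_neg h1n, hii, hi, if_neg h2n]
  intro hmem
  rw [mem_tileSides] at hmem
  cases hpol : pol G (i-1) <;> rw [hpol] at hstep hh hb <;> simp at hstep hh <;>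
    simp [hpol, hb, vert, vA, vB, hstep, hh, southSide, northSide, westSide, eastSide,
      Prod.ext_iff] at hmem <;>
    omega

/-- every matching edge lies on some tile -/
lemma seq_mem (h : ℕ → Bool) (hOK : OK G h) (ℓ : ℕ) (hd : ℓ ≤ G.d) :
    ∃ i, 1 ≤ i ∧ i ≤ G.d ∧ seqEdge G h ℓ ∈ tileSides (G.corner i) := by
  by_cases h0 : ℓ = 0
  · refine ⟨1, le_rfl, G.one_le_d, ?_⟩
    have := seq_left G h 1 le_rfl G.one_le_d (Or.inl rfl)
    simp at this
    rw [h0, this]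
    rw [mem_tileSides]
    cases h 1 <;> simp
  · have h1 : 1 ≤ ℓ := by omega
    by_cases hde : ℓ = G.d
    · refine ⟨ℓ, h1, by omega, ?_⟩
      rw [seq_right G h ℓ h1 (by omega) (Or.inl hde), mem_tileSides]
      cases h ℓ <;> simp
    · by_cases hbl : h (ℓ+1) = pol G ℓ
      · refine ⟨ℓ+1, by omega, by omega, ?_⟩
        have hcon := hOK.2 ℓ h1 (by omega)
        have : seqEdge G h ((ℓ+1)-1) = _ :=
          seq_left G h (ℓ+1) (by omega) (by omega)
            (Or.inr (by simp only [Nat.add_sub_cancel]; intro hc; exact hcon ⟨hc, hbl⟩))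
        simp only [Nat.add_sub_cancel] at this
        rw [this, mem_tileSides]
        cases h (ℓ+1) <;> simp
      · refine ⟨ℓ, h1, by omega, ?_⟩
        rw [seq_right G h ℓ h1 (by omega) (Or.inr hbl), mem_tileSides]
        cases h ℓ <;> simp

lemma seq_mem_edges (h : ℕ → Bool) (hOK : OK G h) (ℓ : ℕ) (hd : ℓ ≤ G.d) :
    seqEdge G h ℓ ∈ G.edges := by
  obtain ⟨i, h1, h2, hm⟩ := seq_mem G h hOK ℓ hd
  rw [mem_edges_iff]; exact ⟨i, h1, h2, hm⟩

lemma seq_upperE (h : ℕ → Bool) (hOK : OK G h) (ℓ : ℕ) (hd : ℓ ≤ G.d) :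
    upperE (seqEdge G h ℓ) = hi G h (ℓ+1) :=
  upperE_mk (seq_step G h hOK ℓ hd)

lemma mem_endpoints_seq {v : ℤ × ℤ} (h : ℕ → Bool) (hOK : OK G h) (ℓ : ℕ) (hd : ℓ ≤ G.d) :
    v ∈ endpointsOf (seqEdge G h ℓ) ↔ v = lo G h ℓ ∨ v = hi G h (ℓ+1) := by
  rw [mem_endpointsOf, seqEdge_fst, seq_upperE G h hOK ℓ hd]

lemma lo_eq_hi_false (h : ℕ → Bool) {ℓ m : ℕ} (hd : ℓ ≤ G.d) (hm : m ≤ G.d)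
    (he : lo G h ℓ = hi G h (m+1)) : False := by
  have h1 := vsum_lo G h ℓ hd
  have h2 := vsum_hi G h (m+1) (by omega) (by omega)
  rw [he] at h1
  have hℓm : ℓ = m + 1 := by omega
  subst hℓm
  rw [lo, if_neg (by omega), hi, if_neg (by omega)] at he
  have := vert_inj G he
  cases h (m+1) <;> simp at this

lemma lo_inj (h : ℕ → Bool) {ℓ m : ℕ} (hd : ℓ ≤ G.d) (hm : m ≤ G.d)
    (he : lo G h ℓ = lo G h m) : ℓ = m := by
  have h1 := vsum_lo G h ℓ hd
  have h2 := vsum_lo G h m hm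
  rw [he] at h1; omega

lemma hi_inj (h : ℕ → Bool) {ℓ m : ℕ} (hd : ℓ ≤ G.d) (hm : m ≤ G.d)
    (he : hi G h (ℓ+1) = hi G h (m+1)) : ℓ = m := by
  have h1 := vsum_hi G h (ℓ+1) (by omega) (by omega)
  have h2 := vsum_hi G h (m+1) (by omega) (by omega)
  rw [he] at h1; omega

theorem mset_pm (h : ℕ → Bool) (hOK : OK G h) : G.IsPerfectMatching (mset G h) := by
  constructor
  · rintro e ⟨ℓ, hd, rfl⟩
    exact seq_mem_edges G h hOK ℓ hd
  · intro v hv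
    -- identify the level of v and the matching edge covering it
    have main : ∃ ℓ, ℓ ≤ G.d ∧ v ∈ endpointsOf (seqEdge G h ℓ) ∧
        ∀ m, m ≤ G.d → v ∈ endpointsOf (seqEdge G h m) → m = ℓ := by
      rcases vertex_forms G hv with h0 | ⟨ℓ, h1, h2, hf⟩ | htop
      · -- v = (0,0)
        refine ⟨0, by omega, ?_, ?_⟩
        · rw [mem_endpoints_seq G h hOK 0 (by omega)]
          left; rw [h0, lo, if_pos rfl]
        · intro m hm hvm
          rw [mem_endpoints_seq G h hOK m hm] at hvm
          rcases hvm with he | he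
          · by_contra h0m
            have := vsum_lo G h m hm
            rw [← he, h0] at this; simp [vsum] at this; omega
          · have := vsum_hi G h (m+1) (by omega) (by omega)
            rw [← he, h0] at this; simp [vsum] at this; omega
      · -- v = vA ℓ or vB ℓ : v = vert ℓ t
        obtain ⟨t, rfl⟩ : ∃ t, v = vert G ℓ t := by
          rcases hf with hf | hf
          · exact ⟨false, hf⟩
          · exact ⟨true, hf⟩
        have hln : ℓ ≠ 0 := by omega
        by_cases ht : t = h ℓ
        · -- covered from the right, by edge ℓ
          refine ⟨ℓ, h2, ?_, ?_⟩
          · rw [mem_endpoints_seq G h hOK ℓ h2]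
            left; rw [lo, if_neg hln, ht]
          · intro m hm hvm
            rw [mem_endpoints_seq G h hOK m hm] at hvm
            rcases hvm with he | he
            · -- vert ℓ t = lo m : levels match
              have h1m := vsum_lo G h m hm
              rw [← he, vsum_vert G ℓ t h1 h2] at h1m; omega
            · -- vert ℓ t = hi (m+1) : then t = !h ℓ, contradiction
              have h1m := vsum_hi G h (m+1) (by omega) (by omega)
              rw [← he, vsum_vert G ℓ t h1 h2] at h1m
              have hmℓ : m + 1 = ℓ := by omega
              rw [hi, if_neg (by omega), hmℓ] at he
              have := vert_inj G he
              rw [ht] at this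
              cases h ℓ <;> simp at this
        · -- covered from the left, by edge ℓ-1
          have ht' : t = (!(h ℓ)) := by
            cases t <;> cases hh : h ℓ <;> simp_all
          refine ⟨ℓ - 1, by omega, ?_, ?_⟩
          · rw [mem_endpoints_seq G h hOK (ℓ-1) (by omega)]
            right
            have hii : (ℓ - 1) + 1 = ℓ := by omega
            rw [hii, hi, if_neg (by omega), ht']
          · intro m hm hvm
            rw [mem_endpoints_seq G h hOK m hm] at hvm
            rcases hvm with he | he
            · have h1m := vsum_lo G h m hm
              rw [← he, vsum_vert G ℓ t h1 h2] at h1m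
              have hmℓ : m = ℓ := by omega
              rw [hmℓ, lo, if_neg hln] at he
              have := vert_inj G he
              rw [ht'] at this
              cases h ℓ <;> simp at this
            · have h1m := vsum_hi G h (m+1) (by omega) (by omega)
              rw [← he, vsum_vert G ℓ t h1 h2] at h1m
              omega
      · -- v = top
        refine ⟨G.d, le_rfl, ?_, ?_⟩
        · rw [mem_endpoints_seq G h hOK G.d le_rfl]
          right; rw [htop, hi, if_pos rfl]
        · intro m hm hvm
          rw [mem_endpoints_seq G h hOK m hm] at hvm
          rcases hvm with he | he
          · have := vsum_lo G h m hm
            rw [← he, htop, vsum_top] at this; omega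
          · have := vsum_hi G h (m+1) (by omega) (by omega)
            rw [← he, htop, vsum_top] at this; omega
    obtain ⟨ℓ, hd, hvℓ, huniq⟩ := main
    refine ⟨seqEdge G h ℓ, ⟨⟨ℓ, hd, rfl⟩, hvℓ⟩, ?_⟩
    rintro e ⟨⟨m, hm, rfl⟩, hvm⟩
    rw [huniq m hm hvm]

end SGAux

namespace SGAux
open SnakeGraph
variable (G : SnakeGraph)

def covl (Q : Set LatticeEdge) (v : ℤ × ℤ) : Prop := ∃ e ∈ Q, v = upperE e

open Classical in
noncomputable def codeOf (Q : Set LatticeEdge) : ℕ → Bool :=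
  fun ℓ => if (1 ≤ ℓ ∧ ℓ ≤ G.d) ∧ covl Q (vA G ℓ) then true else false

variable {G}

section Surj
variable {Q : Set LatticeEdge}

lemma cover_unique (hQ : G.IsPerfectMatching Q) {v : ℤ × ℤ} {e e' : LatticeEdge} (hv : v ∈ G.vertices)
    (he : e ∈ Q) (hve : v ∈ endpointsOf e) (he' : e' ∈ Q) (hve' : v ∈ endpointsOf e') :
    e = e' := by
  obtain ⟨w, _, hu⟩ := hQ.2 v hv
  exact (hu e ⟨he, hve⟩).trans (hu e' ⟨he', hve'⟩).symm

lemma mem_Q_endpoints (hQ : G.IsPerfectMatching Q) {e : LatticeEdge} (he : e ∈ Q) :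
    e.1 ∈ G.vertices ∧ upperE e ∈ G.vertices :=
  edge_endpoints_mem G (hQ.1 he)

lemma cover_from (hQ : G.IsPerfectMatching Q) {v : ℤ × ℤ} (hv : v ∈ G.vertices) (hnc : ¬ covl Q v) :
    ∃ e ∈ Q, e.1 = v := by
  obtain ⟨e, ⟨he, hve⟩, _⟩ := hQ.2 v hv
  rw [mem_endpointsOf] at hve
  rcases hve with hve | hve
  · exact ⟨e, he, hve.symm⟩
  · exact absurd ⟨e, he, hve⟩ hnc

lemma not_covl_fst (hQ : G.IsPerfectMatching Q) {e : LatticeEdge} (he : e ∈ Q) : ¬ covl Q e.1 := by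
  rintro ⟨e', he', hup⟩
  have hne : e ≠ e' := by
    intro hx; rw [← hx] at hup; exact upperE_ne e hup.symm
  have hv : e.1 ∈ G.vertices := (mem_Q_endpoints hQ he).1
  exact hne (cover_unique hQ hv he (by rw [mem_endpointsOf]; left; rfl)
    he' (by rw [mem_endpointsOf]; right; exact hup))

/-- at each level exactly one of the two vertices is covered from the left -/
lemma cov_xor (hQ : G.IsPerfectMatching Q) : ∀ ℓ, 1 ≤ ℓ → ℓ ≤ G.d → (covl Q (vA G ℓ) ↔ ¬ covl Q (vB G ℓ)) := by
  have key : ∀ ℓ, 1 ≤ ℓ → ℓ ≤ G.d →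
      ∀ x x' : ℤ × ℤ, ({x, x'} : Set (ℤ × ℤ)) = {vA G ℓ, vB G ℓ} →
      ¬ covl Q x → covl Q x' → x ≠ x' →
      (ℓ = G.d ∨ (covl Q (vA G (ℓ+1)) ↔ ¬ covl Q (vB G (ℓ+1)))) := by
    intro ℓ h1 h2 x x' hpair hnc hc hne
    by_cases hd : ℓ = G.d
    · exact Or.inl hd
    right
    have hxv : x ∈ G.vertices := by
      have : x ∈ ({vA G ℓ, vB G ℓ} : Set (ℤ × ℤ)) := by
        rw [← hpair]; left; rfl
      rcases this with h | h <;> rw [h]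
      · exact vA_mem_vertices G ℓ h1 h2
      · exact vB_mem_vertices G ℓ h1 h2
    have hxs : vsum x = (ℓ : ℤ) := by
      have : x ∈ ({vA G ℓ, vB G ℓ} : Set (ℤ × ℤ)) := by
        rw [← hpair]; left; rfl
      rcases this with h | h <;> rw [h]
      · exact vsum_vA G ℓ h1 h2
      · exact vsum_vB G ℓ h1 h2
    obtain ⟨e, he, hfst⟩ := cover_from hQ hxv hnc
    have hupv : upperE e ∈ G.vertices := (mem_Q_endpoints hQ he).2
    have hups : vsum (upperE e) = ((ℓ+1 : ℕ) : ℤ) := by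
      rw [vsum_upperE, hfst, hxs]; push_cast; ring
    have hup : upperE e = vA G (ℓ+1) ∨ upperE e = vB G (ℓ+1) :=
      vertex_of_vsum G hupv (by omega) (by omega) hups
    -- the other vertex at level ℓ+1 is not covered from the left
    have hother : ∀ y, y ∈ ({vA G (ℓ+1), vB G (ℓ+1)} : Set (ℤ × ℤ)) → y ≠ upperE e →
        ¬ covl Q y := by
      rintro y hy hyne ⟨e', he', hyup⟩
      have he'v : e'.1 ∈ G.vertices := (mem_Q_endpoints hQ he').1
      have he's : vsum e'.1 = (ℓ : ℤ) := by
        have : vsum y = vsum e'.1 + 1 := by rw [hyup, vsum_upperE]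
        have hys : vsum y = ((ℓ+1:ℕ) : ℤ) := by
          rcases hy with h | h <;> rw [h]
          · exact vsum_vA G (ℓ+1) (by omega) (by omega)
          · exact vsum_vB G (ℓ+1) (by omega) (by omega)
        omega
      have he'mem : e'.1 = vA G ℓ ∨ e'.1 = vB G ℓ :=
        vertex_of_vsum G he'v h1 h2 he's
      have he'xx : e'.1 = x ∨ e'.1 = x' := by
        have : e'.1 ∈ ({vA G ℓ, vB G ℓ} : Set (ℤ × ℤ)) := by
          rcases he'mem with h | h <;> rw [h] <;> simp
        rw [← hpair] at this
        simpa using this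
      rcases he'xx with hh | hh
      · -- e' also covers x from the left: e' = e, contradiction with y ≠ upperE e
        have : e' = e := cover_unique hQ hxv he'
          (by rw [mem_endpointsOf]; left; exact hh.symm) he
          (by rw [mem_endpointsOf]; left; exact hfst.symm)
        rw [this] at hyup
        exact hyne hyup
      · -- e' covers x', but x' is covered from the left by some e'': e' = e'' gives e'.1 = upperE e'
        obtain ⟨e'', he'', hx'up⟩ := hc
        have hx'v : x' ∈ G.vertices := by
          have : x' ∈ ({vA G ℓ, vB G ℓ} : Set (ℤ × ℤ)) := by
            rw [← hpair]; right; rfl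
          rcases this with h | h <;> rw [h]
          · exact vA_mem_vertices G ℓ h1 h2
          · exact vB_mem_vertices G ℓ h1 h2
        have : e' = e'' := cover_unique hQ hx'v he'
          (by rw [mem_endpointsOf]; left; exact hh.symm) he''
          (by rw [mem_endpointsOf]; right; exact hx'up)
        rw [this] at hh
        rw [hx'up] at hh
        exact upperE_ne e'' hh.symm
    rcases hup with hup | hup
    · constructor
      · intro _
        apply hother (vB G (ℓ+1)) (by simp)
        rw [hup]
        intro hh
        exact vA_ne_vB G (ℓ+1) hh.symm
      · intro _
        exact ⟨e, he, hup.symm⟩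
    · constructor
      · intro hcA
        exfalso
        apply hother (vA G (ℓ+1)) (by simp) _ hcA
        rw [hup]
        exact vA_ne_vB G (ℓ+1)
      · intro hnB
        exact absurd ⟨e, he, hup.symm⟩ hnB
  -- base case ℓ = 1 and induction
  have base : covl Q (vA G 1) ↔ ¬ covl Q (vB G 1) := by
    have h0v : ((0,0) : ℤ × ℤ) ∈ G.vertices := origin_mem_vertices G
    have hnc : ¬ covl Q ((0,0) : ℤ × ℤ) := by
      rintro ⟨e, he, hup⟩
      have hv := (mem_Q_endpoints hQ he).1
      have := vertex_vsum_range G hv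
      have h2 : vsum ((0,0) : ℤ×ℤ) = vsum e.1 + 1 := by rw [hup, vsum_upperE]
      simp [vsum] at h2 this
      omega
    obtain ⟨e, he, hfst⟩ := cover_from hQ h0v hnc
    have hupv : upperE e ∈ G.vertices := (mem_Q_endpoints hQ he).2
    have hups : vsum (upperE e) = ((1:ℕ) : ℤ) := by
      rw [vsum_upperE, hfst]; simp [vsum]
    have hup : upperE e = vA G 1 ∨ upperE e = vB G 1 :=
      vertex_of_vsum G hupv le_rfl G.one_le_d hups
    have hother : ∀ y, y ≠ upperE e → vsum y = 1 → ¬ covl Q y := by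
      rintro y hyne hys ⟨e', he', hyup⟩
      have he'v : e'.1 ∈ G.vertices := (mem_Q_endpoints hQ he').1
      have he's : vsum e'.1 = 0 := by
        have : vsum y = vsum e'.1 + 1 := by rw [hyup, vsum_upperE]
        omega
      have he'0 : e'.1 = ((0,0) : ℤ × ℤ) := vertex_of_vsum_zero G he'v he's
      have : e' = e := cover_unique hQ h0v he'
        (by rw [mem_endpointsOf]; left; exact he'0.symm) he
        (by rw [mem_endpointsOf]; left; exact hfst.symm)
      rw [this] at hyup
      exact hyne hyup
    rcases hup with hup | hup
    · constructor
      · intro _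
        apply hother (vB G 1)
        · rw [hup]; intro hh
          exact vA_ne_vB G 1 hh.symm
        · exact vsum_vB G 1 le_rfl G.one_le_d
      · intro _; exact ⟨e, he, hup.symm⟩
    · constructor
      · intro hcA
        exfalso
        apply hother (vA G 1) _ (vsum_vA G 1 le_rfl G.one_le_d) hcA
        rw [hup]
        exact vA_ne_vB G 1
      · intro hnB
        exact absurd ⟨e, he, hup.symm⟩ hnB
  intro ℓ h1 h2
  induction ℓ with
  | zero => omega
  | succ n ih =>
    rcases Nat.eq_or_lt_of_le h1 with hn | hn
    · rw [← hn]; exact base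
    · have hn1 : 1 ≤ n := by omega
      have hn2 : n ≤ G.d := by omega
      have ihx := ih hn1 hn2
      by_cases hca : covl Q (vA G n)
      · have hncb : ¬ covl Q (vB G n) := ihx.mp hca
        have := key n hn1 hn2 (vB G n) (vA G n) (by rw [Set.pair_comm]) hncb hca
          (Ne.symm (vA_ne_vB G n))
        rcases this with h | h
        · omega
        · exact h
      · have hcb : covl Q (vB G n) := by
          by_contra hncb
          exact hca (ihx.mpr hncb)
        have := key n hn1 hn2 (vA G n) (vB G n) rfl hca hcb (vA_ne_vB G n)
        rcases this with h | h
        · omega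
        · exact h

end Surj
end SGAux

namespace SGAux
open SnakeGraph
variable {G : SnakeGraph}

section Decode
variable {Q : Set LatticeEdge}

lemma codeOf_eq_true_iff (ℓ : ℕ) :
    codeOf G Q ℓ = true ↔ ((1 ≤ ℓ ∧ ℓ ≤ G.d) ∧ covl Q (vA G ℓ)) := by
  classical
  rw [codeOf]
  split <;> simp_all

lemma codeOf_eq_false_iff (ℓ : ℕ) (h1 : 1 ≤ ℓ) (h2 : ℓ ≤ G.d) :
    codeOf G Q ℓ = false ↔ ¬ covl Q (vA G ℓ) := by
  rw [← Bool.not_eq_true, codeOf_eq_true_iff]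
  simp [h1, h2]

lemma codeOf_out (ℓ : ℕ) (h : ¬(1 ≤ ℓ ∧ ℓ ≤ G.d)) : codeOf G Q ℓ = false := by
  classical
  rw [codeOf]
  split <;> simp_all

/-- the `lo` vertices of the code are not covered from the left -/
lemma code_lo_not_covl (hQ : G.IsPerfectMatching Q) (ℓ : ℕ) (hd : ℓ ≤ G.d) :
    lo G (codeOf G Q) ℓ ∈ G.vertices ∧ ¬ covl Q (lo G (codeOf G Q) ℓ) := by
  by_cases h0 : ℓ = 0
  · subst h0
    rw [lo, if_pos rfl]
    refine ⟨origin_mem_vertices G, ?_⟩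
    rintro ⟨e, he, hup⟩
    have hv := (mem_Q_endpoints hQ he).1
    have hr := vertex_vsum_range G hv
    have h2 : vsum ((0,0) : ℤ×ℤ) = vsum e.1 + 1 := by rw [hup, vsum_upperE]
    simp [vsum] at h2 hr
    omega
  · have h1 : 1 ≤ ℓ := by omega
    rw [lo, if_neg h0]
    cases hc : codeOf G Q ℓ
    · rw [codeOf_eq_false_iff ℓ h1 hd] at hc
      exact ⟨by rw [vert]; simp; exact vA_mem_vertices G ℓ h1 hd, by rw [vert]; simpa⟩
    · rw [codeOf_eq_true_iff] at hc
      have hnb : ¬ covl Q (vB G ℓ) := (cov_xor hQ ℓ h1 hd).mp hc.2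
      exact ⟨by rw [vert]; simp; exact vB_mem_vertices G ℓ h1 hd, by rw [vert]; simpa⟩

/-- key decoding lemma: each edge of the code sequence belongs to Q -/
lemma seq_code_mem (hQ : G.IsPerfectMatching Q) (ℓ : ℕ) (hd : ℓ ≤ G.d) :
    seqEdge G (codeOf G Q) ℓ ∈ Q ∧
      (hi G (codeOf G Q) (ℓ+1) = ((lo G (codeOf G Q) ℓ).1 + 1, (lo G (codeOf G Q) ℓ).2) ∨
       hi G (codeOf G Q) (ℓ+1) = ((lo G (codeOf G Q) ℓ).1, (lo G (codeOf G Q) ℓ).2 + 1)) := by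
  obtain ⟨hxv, hxnc⟩ := code_lo_not_covl hQ ℓ hd
  obtain ⟨e, he, hfst⟩ := cover_from hQ hxv hxnc
  have hupv : upperE e ∈ G.vertices := (mem_Q_endpoints hQ he).2
  have hxs : vsum (lo G (codeOf G Q) ℓ) = (ℓ : ℤ) := vsum_lo G _ ℓ hd
  have hups : vsum (upperE e) = ((ℓ+1 : ℕ) : ℤ) := by
    rw [vsum_upperE, hfst, hxs]; push_cast; ring
  have hup : upperE e = hi G (codeOf G Q) (ℓ+1) := by
    by_cases hde : ℓ = G.d
    · rw [hi, if_pos (by omega)]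
      apply vertex_of_vsum_topv G hupv
      rw [hups, hde]; push_cast; ring
    · have h2 : ℓ + 1 ≤ G.d := by omega
      rw [hi, if_neg (by omega)]
      have hcl : covl Q (upperE e) := ⟨e, he, rfl⟩
      rcases vertex_of_vsum G hupv (by omega) h2 hups with hA | hA
      · have : codeOf G Q (ℓ+1) = true := by
          rw [codeOf_eq_true_iff]
          exact ⟨⟨by omega, h2⟩, by rwa [hA] at hcl⟩
        rw [this, hA, vert]; simp
      · have : codeOf G Q (ℓ+1) = false := by
          rw [codeOf_eq_false_iff (ℓ+1) (by omega) h2]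
          intro hca
          exact ((cov_xor hQ (ℓ+1) (by omega) h2).mp hca) (by rwa [hA] at hcl)
        rw [this, hA, vert]; simp
  constructor
  · have heq : seqEdge G (codeOf G Q) ℓ = e := by
      rw [seqEdge, ← hup, ← hfst]
      cases e with
      | mk p b =>
        cases b <;> simp [upperE] <;> omega
    rw [heq]; exact he
  · rw [← hup, ← hfst]
    cases e with
    | mk p b =>
      cases b <;> simp [upperE]

lemma code_OK (hQ : G.IsPerfectMatching Q) : OK G (codeOf G Q) := by
  constructor
  · intro i hi
    exact codeOf_out i hi
  · intro i h1 h2 ⟨hci, hci1⟩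
    have hstep := step G i h1 (by omega)
    obtain ⟨-, hunit⟩ := seq_code_mem hQ i (by omega)
    rw [lo, if_neg (by omega), hi, if_neg (by omega), hci, hci1] at hunit
    cases hpol : pol G i <;> rw [hpol] at hstep hunit <;> simp at hstep <;>
      simp [vert, vA, vB, hstep, Prod.ext_iff] at hunit <;> omega

lemma mset_code (hQ : G.IsPerfectMatching Q) : mset G (codeOf G Q) = Q := by
  apply Set.eq_of_subset_of_subset
  · rintro e ⟨ℓ, hd, rfl⟩
    exact (seq_code_mem hQ ℓ hd).1
  · intro e he
    have hv : e.1 ∈ G.vertices := (mem_Q_endpoints hQ he).1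
    have hnc : ¬ covl Q e.1 := not_covl_fst hQ he
    have hupv : upperE e ∈ G.vertices := (mem_Q_endpoints hQ he).2
    have hr := vertex_vsum_range G hv
    have hru := vertex_vsum_range G hupv
    have hsu := vsum_upperE e
    -- the level of e.1 is at most d
    have hℓex : ∃ ℓ : ℕ, ℓ ≤ G.d ∧ vsum e.1 = (ℓ : ℤ) := by
      refine ⟨(vsum e.1).toNat, by omega, by omega⟩
    obtain ⟨ℓ, hd, hℓ⟩ := hℓex
    have hfst : e.1 = lo G (codeOf G Q) ℓ := by
      by_cases h0 : ℓ = 0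
      · subst h0
        rw [lo, if_pos rfl]
        exact vertex_of_vsum_zero G hv (by omega)
      · have h1 : 1 ≤ ℓ := by omega
        rw [lo, if_neg h0]
        rcases vertex_of_vsum G hv h1 hd hℓ with hA | hA
        · have : codeOf G Q ℓ = false := by
            rw [codeOf_eq_false_iff ℓ h1 hd]
            rwa [hA] at hnc
          rw [this, hA, vert]; simp
        · have : codeOf G Q ℓ = true := by
            rw [codeOf_eq_true_iff]
            refine ⟨⟨h1, hd⟩, ?_⟩
            rw [hA] at hnc
            exact (cov_xor hQ ℓ h1 hd).mpr hnc
          rw [this, hA, vert]; simp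
    have hseq := (seq_code_mem hQ ℓ hd).1
    have hlov : lo G (codeOf G Q) ℓ ∈ G.vertices := (code_lo_not_covl hQ ℓ hd).1
    have : e = seqEdge G (codeOf G Q) ℓ := by
      apply cover_unique hQ hlov he _ hseq
      · rw [mem_endpointsOf, seqEdge_fst]; left; rfl
      · rw [mem_endpointsOf]; left; exact hfst.symm
    rw [this]
    exact ⟨ℓ, hd, rfl⟩

end Decode
end SGAux

namespace SGAux
open SnakeGraph
variable {G : SnakeGraph}

def flippableSG (G : SnakeGraph) (h : ℕ → Bool) (i : ℕ) : Prop :=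
  1 ≤ i ∧ i ≤ G.d ∧ (i = 1 ∨ h (i-1) ≠ pol G (i-1)) ∧ (i = G.d ∨ h (i+1) ≠ pol G i)

def flip (i : ℕ) (h : ℕ → Bool) : ℕ → Bool := Function.update h i (!h i)

lemma flip_apply (i : ℕ) (h : ℕ → Bool) (j : ℕ) :
    flip i h j = if j = i then !h i else h j := by
  simp [flip, Function.update_apply]

lemma flip_same (i : ℕ) (h : ℕ → Bool) : flip i h i = !h i := by simp [flip_apply]

lemma flip_other {i j : ℕ} (h : ℕ → Bool) (hne : j ≠ i) : flip i h j = h j := by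
  simp [flip_apply, hne]

lemma flip_flip (i : ℕ) (h : ℕ → Bool) : flip i (flip i h) = h := by
  funext j
  by_cases hj : j = i
  · subst hj; simp [flip_apply]
  · simp [flip_apply, hj]

lemma flip_comm {i j : ℕ} (h : ℕ → Bool) (hne : i ≠ j) :
    flip i (flip j h) = flip j (flip i h) := by
  funext k
  by_cases hk : k = i <;> by_cases hk' : k = j <;>
    simp_all [flip_apply]

lemma lo_flip {i ℓ : ℕ} (h : ℕ → Bool) (hne : ℓ ≠ i) :
    lo G (flip i h) ℓ = lo G h ℓ := by
  rw [lo, lo, flip_other h hne]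

lemma hi_flip {i ℓ : ℕ} (h : ℕ → Bool) (hne : ℓ ≠ i) :
    hi G (flip i h) ℓ = hi G h ℓ := by
  rw [hi, hi, flip_other h hne]

lemma seqEdge_flip {i ℓ : ℕ} (h : ℕ → Bool) (hne : ℓ ≠ i) (hne' : ℓ + 1 ≠ i) :
    seqEdge G (flip i h) ℓ = seqEdge G h ℓ := by
  rw [seqEdge, seqEdge, lo_flip h hne, hi_flip h hne']

lemma OK_flip (h : ℕ → Bool) (hOK : OK G h) {i : ℕ} (hfl : flippableSG G h i) :
    OK G (flip i h) := by
  obtain ⟨h1, h2, hL, hR⟩ := hfl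
  constructor
  · intro j hj
    rw [flip_other h (by omega)]
    exact hOK.1 j hj
  · intro j hj1 hj2 ⟨ha, hb⟩
    by_cases hji : j = i
    · subst hji
      rcases hR with hR | hR
      · omega
      · rw [flip_other h (by omega)] at hb
        exact hR hb
    · by_cases hji' : j + 1 = i
      · have hji2 : j = i - 1 := by omega
        rcases hL with hL | hL
        · omega
        · rw [flip_other h hji] at ha
          rw [hji2] at ha
          exact hL ha
      · rw [flip_other h hji] at ha
        rw [flip_other h hji'] at hb
        exact hOK.2 j hj1 hj2 ⟨ha, hb⟩

lemma flippableSG_flip (h : ℕ → Bool) {i : ℕ} (hfl : flippableSG G h i) :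
    flippableSG G (flip i h) i := by
  obtain ⟨h1, h2, hL, hR⟩ := hfl
  refine ⟨h1, h2, ?_, ?_⟩
  · rcases hL with hL | hL
    · exact Or.inl hL
    · right; rwa [flip_other h (by omega)]
  · rcases hR with hR | hR
    · exact Or.inl hR
    · right; rwa [flip_other h (by omega)]

lemma seq_ne {ℓ m : ℕ} (h : ℕ → Bool) (hd : ℓ ≤ G.d) (hm : m ≤ G.d) (hne : ℓ ≠ m) :
    seqEdge G h ℓ ≠ seqEdge G h m := by
  intro he
  have := congrArg (fun e => vsum (Prod.fst e)) he
  simp only [seqEdge_fst] at this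
  rw [vsum_lo G h ℓ hd, vsum_lo G h m hm] at this
  omega

lemma inter_tile (h : ℕ → Bool) (hOK : OK G h) {i : ℕ} (hfl : flippableSG G h i) :
    mset G h ∩ G.tile i = {seqEdge G h (i-1), seqEdge G h i} := by
  obtain ⟨h1, h2, hL, hR⟩ := hfl
  apply Set.eq_of_subset_of_subset
  · rintro e ⟨⟨ℓ, hd, rfl⟩, ht⟩
    rcases seq_level G h hd h1 h2 ht with he | he <;> rw [he] <;> simp
  · have hsl := seq_left G h i h1 h2 hL
    have hsr := seq_right G h i h1 h2 hR
    rintro e (rfl | rfl)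
    · refine ⟨⟨i-1, by omega, rfl⟩, ?_⟩
      rw [hsl]
      unfold SnakeGraph.tile
      rw [mem_tileSides]
      cases h i <;> simp
    · refine ⟨⟨i, h2, rfl⟩, ?_⟩
      rw [hsr]
      unfold SnakeGraph.tile
      rw [mem_tileSides]
      cases h i <;> simp

lemma canTwist_of_flippable (h : ℕ → Bool) (hOK : OK G h) {i : ℕ}
    (hfl : flippableSG G h i) : G.CanTwist (mset G h) i := by
  obtain ⟨h1, h2, hL, hR⟩ := hfl
  refine ⟨h1, h2, ?_⟩
  rw [inter_tile h hOK ⟨h1, h2, hL, hR⟩]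
  exact Set.ncard_pair (seq_ne h (by omega) h2 (by omega))

/-- the four sides of tile i are the two old and two new matching edges -/
lemma sides_pair_left (h : ℕ → Bool) {i : ℕ} (h1 : 1 ≤ i) (h2 : i ≤ G.d)
    (hL : i = 1 ∨ h (i-1) ≠ pol G (i-1)) :
    (seqEdge G h (i-1) = southSide (G.corner i) ∧
     seqEdge G (flip i h) (i-1) = westSide (G.corner i)) ∨
    (seqEdge G h (i-1) = westSide (G.corner i) ∧
     seqEdge G (flip i h) (i-1) = southSide (G.corner i)) := by
  have hL' : i = 1 ∨ flip i h (i-1) ≠ pol G (i-1) := by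
    rcases hL with hc | hc
    · exact Or.inl hc
    · right; rwa [flip_other h (by omega)]
  have e1 := seq_left G h i h1 h2 hL
  have e2 := seq_left G (flip i h) i h1 h2 hL'
  rw [flip_same] at e2
  cases hh : h i <;> rw [hh] at e1 e2 <;> simp at e1 e2
  · exact Or.inr ⟨e1, e2⟩
  · exact Or.inl ⟨e1, e2⟩

lemma sides_pair_right (h : ℕ → Bool) {i : ℕ} (h1 : 1 ≤ i) (h2 : i ≤ G.d)
    (hR : i = G.d ∨ h (i+1) ≠ pol G i) :
    (seqEdge G h i = northSide (G.corner i) ∧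
     seqEdge G (flip i h) i = eastSide (G.corner i)) ∨
    (seqEdge G h i = eastSide (G.corner i) ∧
     seqEdge G (flip i h) i = northSide (G.corner i)) := by
  have hR' : i = G.d ∨ flip i h (i+1) ≠ pol G i := by
    rcases hR with hc | hc
    · exact Or.inl hc
    · right; rwa [flip_other h (by omega)]
  have e1 := seq_right G h i h1 h2 hR
  have e2 := seq_right G (flip i h) i h1 h2 hR'
  rw [flip_same] at e2
  cases hh : h i <;> rw [hh] at e1 e2 <;> simp at e1 e2
  · exact Or.inr ⟨e1, e2⟩
  · exact Or.inl ⟨e1, e2⟩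

lemma side_ne_SW (c : ℤ × ℤ) : southSide c ≠ westSide c := by
  simp [southSide, westSide]
lemma side_ne_NE (c : ℤ × ℤ) : northSide c ≠ eastSide c := by
  simp [northSide, eastSide]
lemma side_ne_SN (c : ℤ × ℤ) : southSide c ≠ northSide c := by
  simp [southSide, northSide, Prod.ext_iff]
lemma side_ne_SE (c : ℤ × ℤ) : southSide c ≠ eastSide c := by
  simp [southSide, eastSide]
lemma side_ne_WN (c : ℤ × ℤ) : westSide c ≠ northSide c := by
  simp [westSide, northSide]
lemma side_ne_WE (c : ℤ × ℤ) : westSide c ≠ eastSide c := by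
  simp [westSide, eastSide, Prod.ext_iff]

lemma twist_eq_flip (h : ℕ → Bool) (hOK : OK G h) {i : ℕ} (hfl : flippableSG G h i) :
    G.twist i (mset G h) = mset G (flip i h) := by
  obtain ⟨h1, h2, hL, hR⟩ := hfl
  have hit := inter_tile h hOK ⟨h1, h2, hL, hR⟩
  have hpl := sides_pair_left h h1 h2 hL
  have hpr := sides_pair_right h h1 h2 hR
  have hilev : ∀ ℓ : ℕ, ℓ ≤ G.d → seqEdge G h ℓ ∈ G.tile i → ℓ = i - 1 ∨ ℓ = i :=
    fun ℓ hd ht => seq_level G h hd h1 h2 ht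
  have hilev' : ∀ ℓ : ℕ, ℓ ≤ G.d → seqEdge G (flip i h) ℓ ∈ G.tile i → ℓ = i - 1 ∨ ℓ = i :=
    fun ℓ hd ht => seq_level G (flip i h) hd h1 h2 ht
  have hflipmem : seqEdge G (flip i h) (i-1) ∈ G.tile i ∧ seqEdge G (flip i h) i ∈ G.tile i := by
    constructor
    · rcases hpl with ⟨_, e2⟩ | ⟨_, e2⟩ <;> rw [e2] <;>
        (unfold SnakeGraph.tile; rw [mem_tileSides]; simp)
    · rcases hpr with ⟨_, e2⟩ | ⟨_, e2⟩ <;> rw [e2] <;>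
        (unfold SnakeGraph.tile; rw [mem_tileSides]; simp)
  have hflipnotP : seqEdge G (flip i h) (i-1) ∉ mset G h ∧ seqEdge G (flip i h) i ∉ mset G h := by
    constructor
    · intro hmem
      have : seqEdge G (flip i h) (i-1) ∈ mset G h ∩ G.tile i := ⟨hmem, hflipmem.1⟩
      rw [hit] at this
      rcases this with heq | heq
      · rcases hpl with ⟨e1, e2⟩ | ⟨e1, e2⟩ <;> rw [e1, e2] at heq
        · exact side_ne_SW _ heq.symm
        · exact side_ne_SW _ heq
      · -- level mismatch: seqEdge flip (i-1) has level i-1, seqEdge h i has level i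
        have := congrArg (fun e => vsum (Prod.fst e)) heq
        simp only [seqEdge_fst] at this
        rw [vsum_lo G (flip i h) (i-1) (by omega), vsum_lo G h i h2] at this
        omega
    · intro hmem
      have : seqEdge G (flip i h) i ∈ mset G h ∩ G.tile i := ⟨hmem, hflipmem.2⟩
      rw [hit] at this
      rcases this with heq | heq
      · have := congrArg (fun e => vsum (Prod.fst e)) heq
        simp only [seqEdge_fst] at this
        rw [vsum_lo G (flip i h) i h2, vsum_lo G h (i-1) (by omega)] at this
        omega
      · rcases hpr with ⟨e1, e2⟩ | ⟨e1, e2⟩ <;> rw [e1, e2] at heq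
        · exact side_ne_NE _ heq.symm
        · exact side_ne_NE _ heq
  apply Set.eq_of_subset_of_subset
  · rintro e (⟨⟨ℓ, hd, rfl⟩, hnt⟩ | ⟨ht, hnp⟩)
    · -- edge of P not on tile i : unchanged
      have hℓne : ℓ ≠ i - 1 ∧ ℓ ≠ i := by
        constructor <;> intro hc <;> subst hc
        · rcases hpl with ⟨e1, _⟩ | ⟨e1, _⟩ <;> rw [e1] at hnt <;>
            exact hnt (by unfold SnakeGraph.tile; rw [mem_tileSides]; simp)
        · rcases hpr with ⟨e1, _⟩ | ⟨e1, _⟩ <;> rw [e1] at hnt <;>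
            exact hnt (by unfold SnakeGraph.tile; rw [mem_tileSides]; simp)
      refine ⟨ℓ, hd, ?_⟩
      rw [seqEdge_flip h (by omega) (by omega)]
    · -- edge of tile i not in P : one of the two flipped edges
      unfold SnakeGraph.tile at ht
      rw [mem_tileSides] at ht
      have hPl : seqEdge G h (i-1) ∈ mset G h := ⟨i-1, by omega, rfl⟩
      have hPr : seqEdge G h i ∈ mset G h := ⟨i, h2, rfl⟩
      rcases hpl with ⟨e1, e2⟩ | ⟨e1, e2⟩ <;> rcases hpr with ⟨f1, f2⟩ | ⟨f1, f2⟩ <;>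
        rcases ht with rfl | rfl | rfl | rfl <;>
        first
          | (rw [← e1] at hnp; exact absurd hPl hnp)
          | (rw [← f1] at hnp; exact absurd hPr hnp)
          | (exact ⟨i-1, by omega, e2⟩)
          | (exact ⟨i, h2, f2⟩)
  · rintro e ⟨ℓ, hd, rfl⟩
    by_cases hℓ : ℓ = i - 1 ∨ ℓ = i
    · right
      rcases hℓ with rfl | rfl
      · exact ⟨hflipmem.1, hflipnotP.1⟩
      · exact ⟨hflipmem.2, hflipnotP.2⟩
    · push_neg at hℓ
      left
      rw [seqEdge_flip h (by omega) (by omega)]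
      refine ⟨⟨ℓ, hd, rfl⟩, ?_⟩
      intro ht
      rcases hilev ℓ hd ht with hc | hc <;> omega
  
lemma flippable_of_canTwist (h : ℕ → Bool) (hOK : OK G h) {i : ℕ}
    (hct : G.CanTwist (mset G h) i) : flippableSG G h i := by
  obtain ⟨h1, h2, hcard⟩ := hct
  refine ⟨h1, h2, ?_, ?_⟩
  · by_contra hc
    push_neg at hc
    obtain ⟨hne1, hbl⟩ := hc
    have hsub : mset G h ∩ G.tile i ⊆ {seqEdge G h i} := by
      rintro e ⟨⟨ℓ, hd, rfl⟩, ht⟩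
      rcases seq_level G h hd h1 h2 ht with he | he
      · exfalso
        rw [he] at ht
        exact seq_left_blocked G h hOK i (by omega) h2 hbl ht
      · rw [he]; rfl
    have := Set.ncard_le_ncard hsub (Set.finite_singleton _)
    rw [Set.ncard_singleton] at this
    omega
  · by_contra hc
    push_neg at hc
    obtain ⟨hne1, hbl⟩ := hc
    have hsub : mset G h ∩ G.tile i ⊆ {seqEdge G h (i-1)} := by
      rintro e ⟨⟨ℓ, hd, rfl⟩, ht⟩
      rcases seq_level G h hd h1 h2 ht with he | he
      · rw [he]; rfl
      · exfalso
        rw [he] at ht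
        exact seq_right_blocked G h hOK i h1 (by omega) hbl ht
    have := Set.ncard_le_ncard hsub (Set.finite_singleton _)
    rw [Set.ncard_singleton] at this
    omega

/-- injectivity of the coding -/
lemma mset_inj {h h' : ℕ → Bool} (hOK : OK G h) (hOK' : OK G h')
    (he : mset G h = mset G h') : h = h' := by
  funext ℓ
  by_cases hr : 1 ≤ ℓ ∧ ℓ ≤ G.d
  · have hmem : seqEdge G h ℓ ∈ mset G h' := by
      rw [← he]; exact ⟨ℓ, hr.2, rfl⟩
    obtain ⟨m, hm, hseq⟩ := hmem
    have hlev : m = ℓ := by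
      have := congrArg (fun e => vsum (Prod.fst e)) hseq
      simp only [seqEdge_fst] at this
      rw [vsum_lo G h' m hm, vsum_lo G h ℓ hr.2] at this
      omega
    subst hlev
    have := congrArg Prod.fst hseq
    simp only [seqEdge_fst] at this
    rw [lo, lo, if_neg (by omega), if_neg (by omega)] at this
    exact (vert_inj G this).symm
  · rw [hOK.1 ℓ hr, hOK'.1 ℓ hr]

end SGAux

namespace SGAux
open SnakeGraph
variable {G : SnakeGraph}

def Eb (i : ℕ) : Bool := decide (i % 2 = 0)

def Good (G : SnakeGraph) (h : ℕ → Bool) (i : ℕ) : Prop :=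
  flippableSG G h i ∧ h i = Eb i

def rho (G : SnakeGraph) (h : ℕ → Bool) : ℕ :=
  ((Finset.Icc 1 G.d).filter (fun i => h i = Eb i)).card

def hmin (G : SnakeGraph) : ℕ → Bool := fun i => if 1 ≤ i ∧ i ≤ G.d then !Eb i else false

lemma Eb_succ (i : ℕ) : Eb (i+1) = !Eb i := by
  rcases Nat.mod_two_eq_zero_or_one i with h | h <;>
    simp [Eb, Nat.add_mod, h]

lemma hmin_OK : OK G (hmin G) := by
  constructor
  · intro i hi
    simp only [hmin, if_neg hi]
  · intro i h1 h2 ⟨ha, hb⟩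
    rw [hmin, if_pos (by omega : 1 ≤ i ∧ i ≤ G.d)] at ha
    rw [hmin, if_pos (by omega : 1 ≤ i + 1 ∧ i + 1 ≤ G.d)] at hb
    rw [Eb_succ] at hb
    rw [← ha] at hb
    cases Eb i <;> simp at hb

lemma rho_eq_zero {h : ℕ → Bool} (hOK : OK G h) (hz : rho G h = 0) : h = hmin G := by
  funext j
  by_cases hr : 1 ≤ j ∧ j ≤ G.d
  · have hnm : j ∉ (Finset.Icc 1 G.d).filter (fun i => h i = Eb i) := by
      intro hj
      have hz' : (Finset.Icc 1 G.d).filter (fun i => h i = Eb i) = ∅ :=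
        Finset.card_eq_zero.mp hz
      rw [hz'] at hj
      exact absurd hj (Finset.notMem_empty j)
    rw [Finset.mem_filter] at hnm
    push_neg at hnm
    have := hnm (Finset.mem_Icc.mpr hr)
    rw [hmin, if_pos hr]
    cases hEj : Eb j <;> cases hhj : h j <;> simp_all
  · rw [hOK.1 j hr, hmin, if_neg hr]

lemma filter_flip_on {h : ℕ → Bool} {i : ℕ} (h1 : 1 ≤ i) (h2 : i ≤ G.d)
    (hon : h i = Eb i) :
    (Finset.Icc 1 G.d).filter (fun j => flip i h j = Eb j) =
      ((Finset.Icc 1 G.d).filter (fun j => h j = Eb j)).erase i := by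
  ext j
  rw [Finset.mem_erase, Finset.mem_filter, Finset.mem_filter]
  by_cases hj : j = i
  · subst hj
    rw [flip_same, hon]
    simp
  · rw [flip_other h hj]
    tauto

lemma rho_flip_on {h : ℕ → Bool} {i : ℕ} (h1 : 1 ≤ i) (h2 : i ≤ G.d)
    (hon : h i = Eb i) :
    rho G (flip i h) = rho G h - 1 ∧ 1 ≤ rho G h := by
  have hmem : i ∈ (Finset.Icc 1 G.d).filter (fun j => h j = Eb j) := by
    rw [Finset.mem_filter, Finset.mem_Icc]
    exact ⟨⟨h1, h2⟩, hon⟩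
  constructor
  · rw [rho, rho, filter_flip_on h1 h2 hon, Finset.card_erase_of_mem hmem]
  · exact Finset.card_pos.mpr ⟨i, hmem⟩ 

lemma rho_flip_off {h : ℕ → Bool} {i : ℕ} (h1 : 1 ≤ i) (h2 : i ≤ G.d)
    (hoff : h i ≠ Eb i) :
    rho G (flip i h) = rho G h + 1 := by
  have hon : flip i h i = Eb i := by
    rw [flip_same]
    cases hhi : h i <;> cases hEi : Eb i <;> simp_all
  have := (rho_flip_on h1 h2 hon).1
  rw [flip_flip] at this
  have hge := (rho_flip_on h1 h2 hon).2
  omega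

lemma good_not_adjacent {h : ℕ → Bool} (hOK : OK G h) {i : ℕ}
    (hgi : Good G h i) (hgi1 : Good G h (i+1)) : False := by
  obtain ⟨⟨hi1, hi2, hiL, hiR⟩, hion⟩ := hgi
  obtain ⟨⟨hj1, hj2, hjL, hjR⟩, hjon⟩ := hgi1
  have hR : h (i+1) ≠ pol G i := by
    rcases hiR with hc | hc
    · omega
    · exact hc
  have hL : h i ≠ pol G i := by
    rcases hjL with hc | hc
    · omega
    · simpa using hc
  rw [Eb_succ, ← hion] at hjon
  revert hR hL
  rw [hjon]
  cases h i <;> cases pol G i <;> simp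

/-- leftward walk: an "on" index with good right-condition yields a Good index -/
lemma walk_left {h : ℕ → Bool} (hOK : OK G h) :
    ∀ i, 1 ≤ i → i ≤ G.d → h i = Eb i → (i = G.d ∨ h (i+1) ≠ pol G i) →
      ∃ j, Good G h j := by
  intro i
  induction i using Nat.strong_induction_on with
  | _ i ih =>
    intro h1 h2 hon hR
    by_cases hL : i = 1 ∨ h (i-1) ≠ pol G (i-1)
    · exact ⟨i, ⟨h1, h2, hL, hR⟩, hon⟩
    · push_neg at hL
      obtain ⟨hne1, hbl⟩ := hL
      have hcon := hOK.2 (i-1) (by omega) (by omega)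
      rw [(by omega : (i-1) + 1 = i)] at hcon
      have hhi : h i ≠ pol G (i-1) := fun hc => hcon ⟨hbl, hc⟩
      have hpol : pol G (i-1) = Eb (i-1) := by
        have hEs : Eb i = !Eb (i-1) := by
          rw [← Eb_succ (i-1), (by omega : (i-1) + 1 = i)]
        rw [hon, hEs] at hhi
        cases hE : Eb (i-1) <;> cases hp : pol G (i-1) <;> simp_all
      apply ih (i-1) (by omega) (by omega) (by omega) (by rw [hbl, hpol])
      right
      rw [(by omega : (i-1) + 1 = i)]
      exact hhi

lemma walk_right {h : ℕ → Bool} (hOK : OK G h) :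
    ∀ k i, 1 ≤ i → i ≤ G.d → G.d - i ≤ k → h i = Eb i →
      (i = 1 ∨ h (i-1) ≠ pol G (i-1)) → ∃ j, Good G h j := by
  intro k
  induction k with
  | zero =>
    intro i h1 h2 hk hon hL
    exact ⟨i, ⟨h1, h2, hL, Or.inl (by omega)⟩, hon⟩
  | succ n ih =>
    intro i h1 h2 hk hon hL
    by_cases hR : i = G.d ∨ h (i+1) ≠ pol G i
    · exact ⟨i, ⟨h1, h2, hL, hR⟩, hon⟩
    · push_neg at hR
      obtain ⟨hned, hbl⟩ := hR
      have hcon := hOK.2 i h1 (by omega)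
      have hhi : h i ≠ pol G i := fun hc => hcon ⟨hc, hbl⟩
      have hpol : pol G i = Eb (i+1) := by
        rw [hon] at hhi
        rw [Eb_succ]
        cases hE : Eb i <;> cases hp : pol G i <;> simp_all
      apply ih (i+1) (by omega) (by omega) (by omega) (by rw [hbl, hpol])
      right
      simpa using hhi

lemma descent {h : ℕ → Bool} (hOK : OK G h) (hpos : 0 < rho G h) :
    ∃ j, Good G h j := by
  obtain ⟨i, hi⟩ := Finset.card_pos.mp hpos
  rw [Finset.mem_filter, Finset.mem_Icc] at hi
  obtain ⟨⟨h1, h2⟩, hon⟩ := hi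
  by_cases hR : i = G.d ∨ h (i+1) ≠ pol G i
  · exact walk_left hOK i h1 h2 hon hR
  · push_neg at hR
    obtain ⟨hned, hbl⟩ := hR
    have hcon := hOK.2 i h1 (by omega)
    have hhi : h i ≠ pol G i := fun hc => hcon ⟨hc, hbl⟩
    have hpol : pol G i = Eb (i+1) := by
      rw [hon] at hhi
      rw [Eb_succ]
      cases hE : Eb i <;> cases hp : pol G i <;> simp_all
    apply walk_right hOK (G.d - (i+1)) (i+1) (by omega) (by omega) (by omega)
      (by rw [hbl, hpol])
    right
    simpa using hhi

lemma Good_flip_far {h : ℕ → Bool} (hOK : OK G h) {i j : ℕ}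
    (hgi : Good G h i) (hgj : Good G h j) (hne : i ≠ j) : Good G (flip j h) i := by
  have hne1 : i ≠ j + 1 := by
    intro hc
    exact good_not_adjacent hOK hgj (hc ▸ hgi)
  have hne2 : j ≠ i + 1 := by
    intro hc
    exact good_not_adjacent hOK hgi (hc ▸ hgj)
  obtain ⟨⟨h1, h2, hL, hR⟩, hon⟩ := hgi
  refine ⟨⟨h1, h2, ?_, ?_⟩, by rw [flip_other h hne]; exact hon⟩
  · rcases hL with hc | hc
    · exact Or.inl hc
    · right
      rwa [flip_other h (by omega)]
  · rcases hR with hc | hc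
    · exact Or.inl hc
    · right
      rwa [flip_other h (by omega)]

end SGAux

namespace SGAux

open Classical in
noncomputable def Vaux (G : SnakeGraph) (W : ℕ → (ℕ → Bool) → ℤ) : ℕ → (ℕ → Bool) → ℤ
  | 0, _ => 0
  | (n+1), h =>
    if hx : ∃ j, Good G h j then
      Vaux G W n (flip (Classical.choose hx) h) + W (Classical.choose hx) h
    else 0

noncomputable def Vfull (G : SnakeGraph) (W : ℕ → (ℕ → Bool) → ℤ) (h : ℕ → Bool) : ℤ :=
  Vaux G W (rho G h) h

open Classical in
lemma Vaux_succ (G : SnakeGraph) (W : ℕ → (ℕ → Bool) → ℤ) (n : ℕ) (h : ℕ → Bool) :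
    Vaux G W (n+1) h = if hx : ∃ j, Good G h j then
      Vaux G W n (flip (Classical.choose hx) h) + W (Classical.choose hx) h
    else 0 := by
  rw [Vaux]

section Valuation
variable {G : SnakeGraph}
variable {W : ℕ → (ℕ → Bool) → ℤ}
variable (hWa : ∀ i h, OK G h → flippableSG G h i → W i (flip i h) = - W i h)
variable (hWb : ∀ i j h, OK G h → flippableSG G h i → flippableSG G h j →
  1 < ((i : ℤ) - (j : ℤ)).natAbs → W i h + W j (flip i h) = W j h + W i (flip j h))

include hWb in
lemma Vaux_good : ∀ n h i, OK G h → rho G h = n → Good G h i →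
    Vaux G W n h = Vaux G W (n-1) (flip i h) + W i h := by
  intro n
  induction n using Nat.strong_induction_on with
  | _ n ihn =>
    intro h i hOK hrho hgi
    have hx : ∃ j, Good G h j := ⟨i, hgi⟩
    have hnpos : 1 ≤ n := by
      rw [← hrho]
      exact (rho_flip_on hgi.1.1 hgi.1.2.1 hgi.2).2
    obtain ⟨m, rfl⟩ : ∃ m, n = m + 1 := ⟨n - 1, by omega⟩
    rw [Vaux_succ, dif_pos hx]
    have hgJ := Classical.choose_spec hx
    set J := Classical.choose hx with hJdef
    by_cases hiJ : i = J
    · subst hiJ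
      simp
    · -- i and J are distinct good indices, hence far apart
      have hfar : 1 < ((i : ℤ) - (J : ℤ)).natAbs := by
        have hne1 : i ≠ J + 1 := fun hc => good_not_adjacent hOK hgJ (hc ▸ hgi)
        have hne2 : J ≠ i + 1 := fun hc => good_not_adjacent hOK hgi (hc ▸ hgJ)
        omega
      have hgiJ : Good G (flip J h) i := Good_flip_far hOK hgi hgJ hiJ
      have hgJi : Good G (flip i h) J := Good_flip_far hOK hgJ hgi (Ne.symm hiJ)
      have hOK2 : OK G (flip J h) := OK_flip h hOK hgJ.1
      have hOK1 : OK G (flip i h) := OK_flip h hOK hgi.1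
      have hrho2 : rho G (flip J h) = m := by
        have := (rho_flip_on hgJ.1.1 hgJ.1.2.1 hgJ.2).1
        omega
      have hrho1 : rho G (flip i h) = m := by
        have := (rho_flip_on hgi.1.1 hgi.1.2.1 hgi.2).1
        omega
      have ih2 := ihn m (by omega) (flip J h) i hOK2 hrho2 hgiJ
      have ih1 := ihn m (by omega) (flip i h) J hOK1 hrho1 hgJi
      rw [flip_comm h hiJ] at ih2
      have hcomm := hWb i J h hOK hgi.1 hgJ.1 hfar
      simp only [Nat.add_sub_cancel]
      rw [ih2, ih1]
      omega

include hWa hWb in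
lemma Vfull_rel {h : ℕ → Bool} {i : ℕ} (hOK : OK G h) (hfl : flippableSG G h i) :
    Vfull G W h - Vfull G W (flip i h) = W i h := by
  by_cases hon : h i = Eb i
  · have hgi : Good G h i := ⟨hfl, hon⟩
    have h1 := Vaux_good hWb (rho G h) h i hOK rfl hgi
    have hr := (rho_flip_on hfl.1 hfl.2.1 hon).1
    rw [Vfull, Vfull, h1, hr]
    ring
  · set h' := flip i h with hh'
    have hon' : h' i = Eb i := by
      rw [hh', flip_same]
      cases hx : h i <;> cases hE : Eb i <;> simp_all
    have hOK' : OK G h' := OK_flip h hOK hfl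
    have hfl' : flippableSG G h' i := flippableSG_flip h hfl
    have hgi' : Good G h' i := ⟨hfl', hon'⟩
    have h1 := Vaux_good hWb (rho G h') h' i hOK' rfl hgi'
    have hflip : flip i h' = h := by rw [hh', flip_flip]
    have hr : rho G h' = rho G h + 1 := rho_flip_off hfl.1 hfl.2.1 hon
    have hWrel : W i h' = - W i h := hWa i h hOK hfl
    rw [hflip] at h1
    rw [Vfull, Vfull, h1, hr]
    simp only [Nat.add_sub_cancel]
    rw [hWrel]
    ring

lemma unique_diff (u u' : (ℕ → Bool) → ℤ)
    (hu : ∀ h i, OK G h → flippableSG G h i → u h - u (flip i h) = W i h)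
    (hu' : ∀ h i, OK G h → flippableSG G h i → u' h - u' (flip i h) = W i h) :
    ∀ h, OK G h → u h - u' h = u (hmin G) - u' (hmin G) := by
  have main : ∀ n h, rho G h = n → OK G h → u h - u' h = u (hmin G) - u' (hmin G) := by
    intro n
    induction n using Nat.strong_induction_on with
    | _ n ihn =>
      intro h hrho hOK
      by_cases hz : n = 0
      · subst hz
        rw [rho_eq_zero hOK hrho]
      · obtain ⟨j, hgj⟩ := descent hOK (by omega)
        have h1 := hu h j hOK hgj.1
        have h2 := hu' h j hOK hgj.1
        have hr := (rho_flip_on hgj.1.1 hgj.1.2.1 hgj.2).1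
        have := ihn (n-1) (by omega) (flip j h) (by omega) (OK_flip h hOK hgj.1)
        omega
  intro h hOK
  exact main (rho G h) h rfl hOK

end Valuation
end SGAux


open SGAux

/-- Let `Ω` be as in `stmt_7` and let `P₀` be a fixed perfect matching of the
snake graph `G` (for instance the maximal or the minimal matching).  Then
there is a function `v` from perfect matchings of `G` to `ℤ` with `v P₀ = 0`
and `v P - v (μ_i P) = Ω i P` whenever `P` can twist on `G_i`, and `v` is
unique on perfect matchings. -/
theorem valuation_exists_unique
    (G : SnakeGraph) (Ω : ℕ → Set LatticeEdge → ℤ)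
    (hΩa : ∀ i P, G.IsPerfectMatching P → G.CanTwist P i →
      Ω i (G.twist i P) = -Ω i P)
    (hΩb : ∀ i j P, G.IsPerfectMatching P → G.CanTwist P i → G.CanTwist P j →
      1 < ((i : ℤ) - (j : ℤ)).natAbs →
      Ω i P + Ω j (G.twist i P) = Ω j P + Ω i (G.twist j P))
    (P₀ : Set LatticeEdge) (hP₀ : G.IsPerfectMatching P₀) :
    ∃ v : Set LatticeEdge → ℤ,
      (v P₀ = 0 ∧
        ∀ P i, G.IsPerfectMatching P → G.CanTwist P i →
          v P - v (G.twist i P) = Ω i P) ∧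
      ∀ w : Set LatticeEdge → ℤ,
        (w P₀ = 0 ∧
          ∀ P i, G.IsPerfectMatching P → G.CanTwist P i →
            w P - w (G.twist i P) = Ω i P) →
        ∀ P, G.IsPerfectMatching P → w P = v P := by
  classical
  set W : ℕ → (ℕ → Bool) → ℤ := fun i h => Ω i (mset G h) with hWdef
  have hWa : ∀ i h, OK G h → flippableSG G h i → W i (SGAux.flip i h) = - W i h := by
    intro i h hOK hfl
    have hpm := mset_pm G h hOK
    have hct := canTwist_of_flippable h hOK hfl
    have hx := hΩa i (mset G h) hpm hct
    rw [twist_eq_flip h hOK hfl] at hx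
    exact hx
  have hWb : ∀ i j h, OK G h → flippableSG G h i → flippableSG G h j →
      1 < ((i : ℤ) - (j : ℤ)).natAbs →
      W i h + W j (SGAux.flip i h) = W j h + W i (SGAux.flip j h) := by
    intro i j h hOK hfi hfj hdist
    have hpm := mset_pm G h hOK
    have hcti := canTwist_of_flippable h hOK hfi
    have hctj := canTwist_of_flippable h hOK hfj
    have hx := hΩb i j (mset G h) hpm hcti hctj hdist
    rw [twist_eq_flip h hOK hfi, twist_eq_flip h hOK hfj] at hx
    exact hx
  set h₀ : ℕ → Bool := codeOf G P₀ with hh₀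
  have h₀OK : OK G h₀ := code_OK hP₀
  have h₀m : mset G h₀ = P₀ := mset_code hP₀
  set v : Set LatticeEdge → ℤ := fun Q =>
    if hq : ∃ h, OK G h ∧ mset G h = Q then
      Vfull G W (Classical.choose hq) - Vfull G W h₀
    else 0 with hvdef
  have v_eval : ∀ h, OK G h → v (mset G h) = Vfull G W h - Vfull G W h₀ := by
    intro h hOK
    have hq : ∃ h', OK G h' ∧ mset G h' = mset G h := ⟨h, hOK, rfl⟩
    rw [hvdef]
    simp only
    rw [dif_pos hq]
    obtain ⟨hOK', heq⟩ := Classical.choose_spec hq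
    rw [mset_inj hOK' hOK heq]
  have hv0 : v P₀ = 0 := by
    rw [← h₀m, v_eval h₀ h₀OK]
    ring
  have hvrel : ∀ P i, G.IsPerfectMatching P → G.CanTwist P i →
      v P - v (G.twist i P) = Ω i P := by
    intro P i hPM hct
    have hOKP : OK G (codeOf G P) := code_OK hPM
    have hmP : mset G (codeOf G P) = P := mset_code hPM
    rw [← hmP] at hct ⊢
    have hfl : flippableSG G (codeOf G P) i := flippable_of_canTwist _ hOKP hct
    rw [twist_eq_flip _ hOKP hfl, v_eval _ hOKP, v_eval _ (OK_flip _ hOKP hfl)]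
    have hrel := Vfull_rel hWa hWb hOKP hfl
    have hWeq : W i (codeOf G P) = Ω i (mset G (codeOf G P)) := rfl
    rw [hWeq] at hrel
    omega
  refine ⟨v, ⟨hv0, hvrel⟩, ?_⟩
  intro w ⟨hw0, hwrel⟩ P hPM
  set u : (ℕ → Bool) → ℤ := fun h => w (mset G h) with hudef
  set u' : (ℕ → Bool) → ℤ := fun h => v (mset G h) with hu'def
  have hu : ∀ h i, OK G h → flippableSG G h i → u h - u (SGAux.flip i h) = W i h := by
    intro h i hOK hfl
    have hx := hwrel (mset G h) i (mset_pm G h hOK) (canTwist_of_flippable h hOK hfl)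
    rw [twist_eq_flip h hOK hfl] at hx
    exact hx
  have hu' : ∀ h i, OK G h → flippableSG G h i → u' h - u' (SGAux.flip i h) = W i h := by
    intro h i hOK hfl
    have hx := hvrel (mset G h) i (mset_pm G h hOK) (canTwist_of_flippable h hOK hfl)
    rw [twist_eq_flip h hOK hfl] at hx
    exact hx
  have hdiff := unique_diff u u' hu hu'
  have hC : u h₀ - u' h₀ = u (hmin G) - u' (hmin G) := hdiff h₀ h₀OK
  have hzero : u h₀ - u' h₀ = 0 := by
    show w (mset G h₀) - v (mset G h₀) = 0
    rw [h₀m, hw0, hv0]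
    ring
  have hOKP : OK G (codeOf G P) := code_OK hPM
  have hmP : mset G (codeOf G P) = P := mset_code hPM
  have hfin := hdiff (codeOf G P) hOKP
  have hfin1 : u (codeOf G P) - u' (codeOf G P) = 0 := by omega
  have hfin2 : w (mset G (codeOf G P)) - v (mset G (codeOf G P)) = 0 := hfin1
  rw [hmP] at hfin2
  omega
end

section
/- Let m ≥ n ≥ 1, let Λ be a skew-symmetric m×m integer matrix, let B̃ be an m×n integer matrix, let τ ∈ {1, …, n} (viewed as an index in {1, …, m}), and let c be an integer such that the τ-th column b of B̃ satisfies b_τ = 0 and bᵀΛ = c·e_τᵀ (i.e., Σ_k b_k Λ_{kj} equals c if j = τ and 0 otherwise). Write b = b⁺ − b⁻, where b⁺_j = max(b_j, 0) and b⁻_j = max(−b_j, 0), and let e_τ ∈ ℤ^m be the τ-th standard basis vector. For d ≥ 1 and λ ∈ {0,1}^d define v_j(λ) = −e_τ + b⁻ if λ_j = 1 and v_j(λ) = −e_τ + b⁺ if λ_j = 0, and set n(λ) = Σ_{1 ≤ j < j' ≤ d} v_j(λ)ᵀ Λ v_{j'}(λ). Then for any i ∈ {1, …, d} and any λ, λ'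 ∈ {0,1}^d with λ_j = λ'_j for all j ≠ i, λ_i = 1 and λ'_i = 0, one has n(λ) − n(λ') = (d − 2i + 1)·c. -/
lemma aux_if_split {d : ℕ} (i j j' : Fin d) (c : ℤ) :
    (if j < j' then (if j = i then c else if j' = i then -c else 0) else 0)
      = (if j = i then (if i < j' then c else 0) else 0)
        + (if j' = i then (if j < i then -c else 0) else 0) := by
  by_cases h1 : j = i
  · subst h1
    by_cases h2 : j' = j <;> simp [h2, lt_irrefl]
  · by_cases h2 : j' = i
    · subst h2
      by_cases h3 : j < j' <;> simp [h1, h3]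
    · simp [h1, h2]

/-- `pairSum Λ v = Σ_{j < j'} (v j)ᵀ Λ (v j')`, the sum over ordered pairs of
indices `j < j'` of the bilinear pairing of `v j` and `v j'` via `Λ`. -/
def pairSum {m d : ℕ} (Λ : Matrix (Fin m) (Fin m) ℤ) (v : Fin d → Fin m → ℤ) : ℤ :=
  ∑ p ∈ Finset.univ.filter (fun p : Fin d × Fin d => p.1 < p.2),
    ∑ a : Fin m, ∑ b : Fin m, v p.1 a * Λ a b * v p.2 b

/-- Let `Λ` be a skew-symmetric `m × m` integer matrix, `B̃` an `m × n` integer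
matrix, `τ ∈ {1,…,n} ⊆ {1,…,m}`, and `c` an integer such that the `τ`-th column
`b` of `B̃` satisfies `b_τ = 0` and `bᵀ Λ = c eτᵀ`.  Write `b = b⁺ - b⁻` and,
for `λ ∈ {0,1}^d`, set `v_j(λ) = -eτ + b⁻` if `λ_j = 1` and `v_j(λ) = -eτ + b⁺`
if `λ_j = 0`, and `n(λ) = Σ_{j < j'} v_j(λ)ᵀ Λ v_{j'}(λ)`.  If `λ` and `λ'`
agree off position `i` (1-indexed) with `λ_i = 1` and `λ'_i = 0`, then
`n(λ) - n(λ') = (d - 2i + 1) c`. -/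
theorem n_lambda_difference
    (m n : ℕ) (hn : 1 ≤ n) (hmn : n ≤ m)
    (Λ : Matrix (Fin m) (Fin m) ℤ) (hΛ : Λ.transpose = -Λ)
    (B : Matrix (Fin m) (Fin n) ℤ) (τ : Fin n) (c : ℤ)
    (b : Fin m → ℤ) (hb : ∀ k, b k = B k τ)
    (hbτ : b (Fin.castLE hmn τ) = 0)
    (hrow : ∀ j : Fin m, (∑ k, b k * Λ k j) =
      if j = Fin.castLE hmn τ then c else 0)
    (bp bm eτ : Fin m → ℤ)
    (hbp : ∀ k, bp k = max (b k) 0) (hbm : ∀ k, bm k = max (-(b k)) 0)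
    (heτ : ∀ k, eτ k = if k = Fin.castLE hmn τ then 1 else 0)
    (d : ℕ) (hd : 1 ≤ d)
    (v : (Fin d → Bool) → Fin d → Fin m → ℤ)
    (hv : ∀ lam (j : Fin d) (k : Fin m),
      v lam j k = if lam j then -eτ k + bm k else -eτ k + bp k)
    (i : Fin d) (lam lam' : Fin d → Bool)
    (hagree : ∀ j, j ≠ i → lam j = lam' j)
    (hi1 : lam i = true) (hi0 : lam' i = false) :
    pairSum Λ (v lam) - pairSum Λ (v lam') =
      ((d : ℤ) - 2 * ((i : ℕ) + 1 : ℤ) + 1) * c := by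
  set τ' : Fin m := Fin.castLE hmn τ with hτ'
  have hbpτ : bp τ' = 0 := by rw [hbp, hbτ]; simp
  have hbmτ : bm τ' = 0 := by rw [hbm, hbτ]; simp
  have heττ : eτ τ' = 1 := by rw [heτ]; simp
  -- every vector v μ j has τ'-entry -1
  have hvτ : ∀ μ (j : Fin d), v μ j τ' = -1 := by
    intro μ j
    rw [hv]
    cases h : μ j <;> simp [heττ, hbpτ, hbmτ]
  -- v lam and v lam' agree off i
  have hveq : ∀ j : Fin d, j ≠ i → v lam j = v lam' j := by
    intro j hj
    funext k
    rw [hv, hv, hagree j hj]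
  -- at i the difference is -b
  have hdiff : ∀ k, v lam i k - v lam' i k = -(b k) := by
    intro k
    rw [hv, hv, hi1, hi0, hbp, hbm]
    simp only [Bool.true_eq_false, if_true, if_false]
    rcases le_total (b k) 0 with h | h <;>
      simp [max_eq_left, max_eq_right, neg_nonneg.mpr, *] <;> omega
  -- key: for any u, Σ_a Σ_b₂ (b a) Λ_{a b₂} u_{b₂} = c * u τ'
  have key_col : ∀ u : Fin m → ℤ,
      (∑ a : Fin m, ∑ b2 : Fin m, b a * Λ a b2 * u b2) = c * u τ' := by
    intro u
    rw [Finset.sum_comm]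
    have h1 : ∀ b2 : Fin m, (∑ a : Fin m, b a * Λ a b2 * u b2)
        = (if b2 = τ' then c else 0) * u b2 := by
      intro b2
      rw [← Finset.sum_mul, hrow b2]
    rw [Finset.sum_congr rfl fun b2 _ => h1 b2]
    simp [Finset.sum_ite_eq', Finset.mem_univ]
  -- skew symmetry pointwise
  have hΛ' : ∀ a b2 : Fin m, Λ a b2 = -Λ b2 a := by
    intro a b2
    simpa [Matrix.transpose_apply, Matrix.neg_apply] using congrFun (congrFun hΛ b2) a
  -- key: for any u, Σ_a Σ_b₂ u_a Λ_{a b₂} (b b₂) = -(c * u τ')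
  have key_row : ∀ u : Fin m → ℤ,
      (∑ a : Fin m, ∑ b2 : Fin m, u a * Λ a b2 * b b2) = -(c * u τ') := by
    intro u
    have h1 : ∀ (a b2 : Fin m), u a * Λ a b2 * b b2 = -(b b2 * Λ b2 a * u a) := by
      intro a b2; rw [hΛ' a b2]; ring
    calc (∑ a : Fin m, ∑ b2 : Fin m, u a * Λ a b2 * b b2)
        = ∑ a : Fin m, ∑ b2 : Fin m, -(b b2 * Λ b2 a * u a) := by
          exact Finset.sum_congr rfl fun a _ => Finset.sum_congr rfl fun b2 _ => h1 a b2
      _ = -(∑ a : Fin m, ∑ b2 : Fin m, b b2 * Λ b2 a * u a) := by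
          simp
      _ = -(∑ b2 : Fin m, ∑ a : Fin m, b b2 * Λ b2 a * u a) := by rw [Finset.sum_comm]
      _ = -(c * u τ') := by rw [key_col u]
  -- the local term
  set F : (Fin d → Bool) → Fin d × Fin d → ℤ :=
    fun μ p => ∑ a : Fin m, ∑ b2 : Fin m, v μ p.1 a * Λ a b2 * v μ p.2 b2 with hF
  -- difference of terms on each pair
  have hterm : ∀ p : Fin d × Fin d, p.1 < p.2 →
      F lam p - F lam' p = if p.1 = i then c else if p.2 = i then -c else 0 := by
    intro p hp
    by_cases h1 : p.1 = i
    · have h2 : p.2 ≠ i := by rintro rfl; exact absurd (h1 ▸ hp) (lt_irrefl _)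
      rw [if_pos h1]
      have hv2 : v lam' p.2 = v lam p.2 := (hveq p.2 h2).symm
      simp only [hF, h1, hv2]
      rw [← Finset.sum_sub_distrib]
      have hstep : ∀ a : Fin m, (∑ b2, v lam i a * Λ a b2 * v lam p.2 b2)
            - (∑ b2, v lam' i a * Λ a b2 * v lam p.2 b2)
          = ∑ b2, -(b a * Λ a b2 * v lam p.2 b2) := by
        intro a
        rw [← Finset.sum_sub_distrib]
        refine Finset.sum_congr rfl fun b2 _ => ?_
        linear_combination (Λ a b2 * v lam p.2 b2) * hdiff a
      rw [Finset.sum_congr rfl fun a _ => hstep a]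
      have hneg : (∑ a : Fin m, ∑ b2 : Fin m, -(b a * Λ a b2 * v lam p.2 b2))
          = -(∑ a : Fin m, ∑ b2 : Fin m, b a * Λ a b2 * v lam p.2 b2) := by
        simp
      rw [hneg, key_col, hvτ]
      ring
    · by_cases h2 : p.2 = i
      · rw [if_neg h1, if_pos h2]
        have hv1 : v lam' p.1 = v lam p.1 := (hveq p.1 h1).symm
        simp only [hF, h2, hv1]
        rw [← Finset.sum_sub_distrib]
        have hstep : ∀ a : Fin m, (∑ b2, v lam p.1 a * Λ a b2 * v lam i b2)
              - (∑ b2, v lam p.1 a * Λ a b2 * v lam' i b2)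
            = ∑ b2, -(v lam p.1 a * Λ a b2 * b b2) := by
          intro a
          rw [← Finset.sum_sub_distrib]
          refine Finset.sum_congr rfl fun b2 _ => ?_
          linear_combination (v lam p.1 a * Λ a b2) * hdiff b2
        rw [Finset.sum_congr rfl fun a _ => hstep a]
        have hneg : (∑ a : Fin m, ∑ b2 : Fin m, -(v lam p.1 a * Λ a b2 * b b2))
            = -(∑ a : Fin m, ∑ b2 : Fin m, v lam p.1 a * Λ a b2 * b b2) := by
          simp
        rw [hneg, key_row, hvτ]
        ring
      · rw [if_neg h1, if_neg h2]
        simp only [hF, hveq p.1 h1, hveq p.2 h2, sub_self]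
  -- compute the total
  have hsplit : pairSum Λ (v lam) - pairSum Λ (v lam')
      = ∑ p ∈ Finset.univ.filter (fun p : Fin d × Fin d => p.1 < p.2),
          (F lam p - F lam' p) := by
    rw [Finset.sum_sub_distrib]; rfl
  rw [hsplit]
  rw [Finset.sum_congr rfl fun p hp => hterm p (Finset.mem_filter.mp hp).2]
  rw [Finset.sum_filter]
  rw [Fintype.sum_prod_type]
  rw [Finset.sum_congr rfl fun j _ => Finset.sum_congr rfl fun j' _ =>
    aux_if_split i j j' c]
  rw [Finset.sum_congr rfl fun j _ => Finset.sum_add_distrib]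
  rw [Finset.sum_add_distrib]
  have hA : (∑ j : Fin d, ∑ j' : Fin d,
      (if j = i then (if i < j' then c else 0) else 0))
      = ((d : ℤ) - (i : ℕ) - 1) * c := by
    have h0 : ∀ j : Fin d, (∑ j' : Fin d, (if j = i then (if i < j' then c else 0) else 0))
        = if j = i then (∑ j' : Fin d, if i < j' then c else 0) else 0 := by
      intro j; split <;> simp
    rw [Finset.sum_congr rfl fun j _ => h0 j, Finset.sum_ite_eq' Finset.univ i]
    simp only [Finset.mem_univ, if_true]
    rw [Finset.sum_ite, Finset.sum_const, Finset.sum_const, smul_zero, add_zero,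
      Finset.filter_lt_eq_Ioi, Fin.card_Ioi, nsmul_eq_mul]
    have h : ((d - 1 - (i:ℕ) : ℕ) : ℤ) = (d:ℤ) - (i:ℕ) - 1 := by
      have := i.isLt; omega
    rw [h]
  have hB : (∑ j : Fin d, ∑ j' : Fin d,
      (if j' = i then (if j < i then -c else 0) else 0))
      = ((i : ℕ) : ℤ) * (-c) := by
    have h0 : ∀ j : Fin d, (∑ j' : Fin d, (if j' = i then (if j < i then -c else 0) else 0))
        = if j < i then -c else 0 := by
      intro j
      rw [Finset.sum_ite_eq' Finset.univ i]
      simp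
    rw [Finset.sum_congr rfl fun j _ => h0 j]
    rw [Finset.sum_ite, Finset.sum_const, Finset.sum_const, smul_zero, add_zero,
      Finset.filter_gt_eq_Iio, Fin.card_Iio, nsmul_eq_mul]
  rw [hA, hB]
  ring
end

section
/- Let m ≥ n ≥ 1, let B̃ be an m×n integer matrix and Λ a skew-symmetric m×m integer matrix such that B̃ᵀΛ = (D 0), where D is an n×n diagonal integer matrix and 0 is the n×(m−n) zero matrix. Let B be the top n×n submatrix of B̃ (B_{ij} = B̃_{ij} for 1 ≤ i, j ≤ n). Then the matrix D·B is skew-symmetric; in particular, if the diagonal entries of D are positive, then B is skew-symmetrizable. -/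
/-- Let `B̃` be an `m × n` integer matrix and `Λ` a skew-symmetric `m × m`
integer matrix with `B̃ᵀ Λ = (D 0)` for a diagonal matrix `D`.  If `B` is the
top `n × n` submatrix of `B̃`, then `D * B` is skew-symmetric; in particular,
if the diagonal entries of `D` are positive, then `B` is skew-symmetrizable. -/
theorem compatible_pair_top_submatrix_skew_symmetrizable
    (m n : ℕ) (hn : 1 ≤ n) (hmn : n ≤ m)
    (Bt : Matrix (Fin m) (Fin n) ℤ) (Λ : Matrix (Fin m) (Fin m) ℤ)
    (hΛ : Λ.transpose = -Λ)
    (D : Matrix (Fin n) (Fin n) ℤ) (hD : D.IsDiag)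
    (hcomp : ∀ (j : Fin n) (l : Fin m),
      (Bt.transpose * Λ) j l = if h : (l : ℕ) < n then D j ⟨(l : ℕ), h⟩ else 0)
    (B : Matrix (Fin n) (Fin n) ℤ)
    (hB : ∀ i j, B i j = Bt (Fin.castLE hmn i) j) :
    (D * B).transpose = -(D * B) ∧
      ((∀ i, 0 < D i i) →
        ∃ D' : Matrix (Fin n) (Fin n) ℤ, D'.IsDiag ∧ (∀ i, 0 < D' i i) ∧
          (D' * B).transpose = -(D' * B)) := by
  have hsum : ∀ (f : Fin m → ℤ), (∀ l : Fin m, ¬((l : ℕ) < n) → f l = 0) →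
      ∑ l : Fin m, f l = ∑ k : Fin n, f (Fin.castLE hmn k) := by
    intro f hf
    have h2 : ∑ k : Fin n, f (Fin.castLE hmn k)
        = ∑ l ∈ Finset.univ.map (Fin.castLEEmb hmn), f l := by
      rw [Finset.sum_map]; rfl
    rw [h2]
    refine (Finset.sum_subset (Finset.subset_univ _) ?_).symm
    intro l _ hl
    refine hf l fun hlt => ?_
    apply hl
    simp only [Finset.mem_map, Finset.mem_univ, true_and]
    exact ⟨⟨(l : ℕ), hlt⟩, by ext; simp⟩
  have key : D * B = Bt.transpose * Λ * Bt := by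
    ext i j
    rw [Matrix.mul_apply, Matrix.mul_apply]
    simp only [hcomp]
    rw [hsum (fun l => (if h : (l : ℕ) < n then D i ⟨(l : ℕ), h⟩ else 0) * Bt l j)
      (fun l hl => by simp [hl])]
    refine Finset.sum_congr rfl fun k _ => ?_
    have hk : ((Fin.castLE hmn k : Fin m) : ℕ) < n := k.isLt
    rw [dif_pos hk, hB]
    congr 1
  have skew : (D * B).transpose = -(D * B) := by
    rw [key, Matrix.transpose_mul, Matrix.transpose_mul, Matrix.transpose_transpose, hΛ]
    simp [Matrix.mul_assoc]
  exact ⟨skew, fun hpos => ⟨D, hD, hpos, skew⟩⟩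
end

section
/- Let m ≥ n ≥ 1 and let (B̃, Λ) be a compatible pair, with B̃ = (b_{ij}) an m×n integer matrix and Λ a skew-symmetric m×m integer matrix. Fix k ∈ {1, …, n} and define the mutated pair (B̃', Λ') by: b'_{ij} = −b_{ij} if i = k or j = k, and b'_{ij} = b_{ij} + [b_{ik}]_+[b_{kj}]_+ − [−b_{ik}]_+[−b_{kj}]_+ otherwise; Λ' is the skew-symmetric m×m matrix with Λ'_{ij} = Λ_{ij} for i, j ≠ k, Λ'_{ik} = −Λ_{ik} + Σ_{l=1}^{m} [b_{lk}]_+ Λ_{il} for i ≠ k, Λ'_{ki} = −Λ'_{ik}, and Λ'_{kk} = 0. Then (B̃')ᵀΛ' = B̃ᵀΛ; in particular (B̃', Λ') is again a compatible pair with the same matrix D. -/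
def auxE {m : ℕ} (K : Fin m) (c : Fin m → ℤ) : Matrix (Fin m) (Fin m) ℤ :=
  Matrix.of fun p q => if q = K then (if p = K then -1 else c p) else if p = q then 1 else 0

theorem mul_auxE {m ν : ℕ} (K : Fin m) (c : Fin m → ℤ) (M : Matrix (Fin ν) (Fin m) ℤ)
    (i : Fin ν) (l : Fin m) :
    (M * auxE K c) i l =
      if l = K then -(M i K) + ∑ q ∈ Finset.univ.erase K, c q * M i q else M i l := by
  rw [Matrix.mul_apply]
  by_cases hl : l = K
  · rw [if_pos hl, hl]
    rw [← Finset.add_sum_erase _ _ (Finset.mem_univ K)]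
    congr 1
    · simp [auxE]
    · apply Finset.sum_congr rfl
      intro q hq
      simp [auxE, Finset.ne_of_mem_erase hq]
      ring
  · rw [if_neg hl]
    simp only [auxE, Matrix.of_apply, if_neg hl, mul_ite, mul_one, mul_zero]
    simp [Finset.sum_ite_eq']

theorem auxE_mul {m ν : ℕ} (K : Fin m) (c : Fin m → ℤ) (M : Matrix (Fin m) (Fin ν) ℤ)
    (i : Fin m) (l : Fin ν) :
    (auxE K c * M) i l =
      if i = K then -(M K l) else M i l + c i * M K l := by
  rw [Matrix.mul_apply]
  by_cases hi : i = K
  · rw [if_pos hi, hi]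
    have : ∀ q, auxE K c K q * M q l = if q = K then -(M q l) else 0 := by
      intro q
      by_cases h1 : q = K
      · simp [auxE, h1]
      · simp only [auxE, Matrix.of_apply, if_neg h1]
        rw [if_neg (fun h => h1 h.symm), zero_mul]
    simp only [this, Finset.sum_ite_eq' Finset.univ K fun q => -(M q l), Finset.mem_univ, if_pos]
  · rw [if_neg hi]
    rw [← Finset.add_sum_erase _ _ (Finset.mem_univ K)]
    have h1 : auxE K c i K * M K l = c i * M K l := by simp [auxE, hi]
    have h2 : ∑ q ∈ Finset.univ.erase K, auxE K c i q * M q l = M i l := by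
      have hc : ∀ q ∈ Finset.univ.erase K, auxE K c i q * M q l = if q = i then M q l else 0 := by
        intro q hq
        simp only [auxE, Matrix.of_apply, if_neg (Finset.ne_of_mem_erase hq)]
        by_cases h2 : i = q
        · simp [h2]
        · rw [if_neg h2, if_neg (fun h => h2 h.symm), zero_mul]
      rw [Finset.sum_congr rfl hc, Finset.sum_ite_eq' _ i fun q => M q l,
        if_pos (Finset.mem_erase.2 ⟨hi, Finset.mem_univ i⟩)]
    rw [h1, h2]
    ring

theorem auxE_sq {m : ℕ} (K : Fin m) (c : Fin m → ℤ) :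
    auxE K c * auxE K c = 1 := by
  ext i l
  rw [auxE_mul]
  by_cases hi : i = K <;> by_cases hl : l = K
  · simp [auxE, Matrix.one_apply, hi, hl]
  · have h : K ≠ l := fun h => hl h.symm
    simp [auxE, Matrix.one_apply, hi, hl, h]
  · simp [auxE, Matrix.one_apply, hi, hl, Ne.symm hi]
  · have h : K ≠ l := fun h => hl h.symm
    simp [auxE, Matrix.one_apply, hi, hl, h]



/-- Mutation of a compatible pair `(B̃, Λ)` in direction `k ∈ {1,…,n}`:
the mutated pair `(B̃', Λ')` (given by the matrix mutation rule for `B̃` and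
the stated rule for `Λ`) satisfies `B̃'ᵀ Λ' = B̃ᵀ Λ`; in particular, `Λ'` is
skew-symmetric and `(B̃', Λ')` is again a compatible pair with the same `D`. -/
theorem mutation_preserves_compatibility
    (m n : ℕ) (hn : 1 ≤ n) (hmn : n ≤ m)
    (Bt : Matrix (Fin m) (Fin n) ℤ) (Λ : Matrix (Fin m) (Fin m) ℤ)
    (D : Matrix (Fin n) (Fin n) ℤ)
    (hΛ : Λ.transpose = -Λ) (hD : D.IsDiag) (hDpos : ∀ i, 0 < D i i)
    (hcomp : ∀ (j : Fin n) (l : Fin m),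
      (Bt.transpose * Λ) j l = if h : (l : ℕ) < n then D j ⟨(l : ℕ), h⟩ else 0)
    (k : Fin n)
    (Bt' : Matrix (Fin m) (Fin n) ℤ) (Λ' : Matrix (Fin m) (Fin m) ℤ)
    (hBt' : ∀ (i : Fin m) (j : Fin n), Bt' i j =
      if i = Fin.castLE hmn k ∨ j = k then -(Bt i j)
      else Bt i j + max (Bt i k) 0 * max (Bt (Fin.castLE hmn k) j) 0
        - max (-(Bt i k)) 0 * max (-(Bt (Fin.castLE hmn k) j)) 0)
    (hΛ'₁ : ∀ i j : Fin m, i ≠ Fin.castLE hmn k → j ≠ Fin.castLE hmn k →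
      Λ' i j = Λ i j)
    (hΛ'₂ : ∀ i : Fin m, i ≠ Fin.castLE hmn k →
      Λ' i (Fin.castLE hmn k) =
        -(Λ i (Fin.castLE hmn k)) + ∑ l : Fin m, max (Bt l k) 0 * Λ i l)
    (hΛ'₃ : ∀ i : Fin m, i ≠ Fin.castLE hmn k →
      Λ' (Fin.castLE hmn k) i = -(Λ' i (Fin.castLE hmn k)))
    (hΛ'₄ : Λ' (Fin.castLE hmn k) (Fin.castLE hmn k) = 0) :
    Bt'.transpose * Λ' = Bt.transpose * Λ ∧
      Λ'.transpose = -Λ' ∧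
      (∀ (j : Fin n) (l : Fin m),
        (Bt'.transpose * Λ') j l = if h : (l : ℕ) < n then D j ⟨(l : ℕ), h⟩ else 0) := by
  have hskew : ∀ p q, Λ q p = -Λ p q := by
    intro p q
    have := congrFun (congrFun hΛ p) q
    simpa [Matrix.transpose_apply] using this
  have hcastne : ∀ a b : Fin n, a ≠ b → (Fin.castLE hmn a) ≠ Fin.castLE hmn b := by
    intro a b hab h
    exact hab (Fin.castLE_injective hmn h)
  have hP0 : ∀ (j : Fin n) (l : Fin m), l ≠ Fin.castLE hmn j → (Bt.transpose * Λ) j l = 0 := by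
    intro j l h
    rw [hcomp]
    split
    · rename_i h'
      apply hD
      rintro rfl
      exact h (Fin.ext rfl)
    · rfl
  have hPd : ∀ j : Fin n, (Bt.transpose * Λ) j (Fin.castLE hmn j) = D j j := by
    intro j
    rw [hcomp, dif_pos (show ((Fin.castLE hmn j : Fin m) : ℕ) < n from j.isLt)]
    exact congrArg (D j) (Fin.ext rfl)
  have hsingle : ∀ (j j' : Fin n),
      ∑ l, (Bt.transpose * Λ) j l * Bt l j' = D j j * Bt (Fin.castLE hmn j) j' := by
    intro j j'
    rw [Finset.sum_eq_single (Fin.castLE hmn j)]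
    · rw [hPd]
    · intro l _ hne
      rw [hP0 j l hne, zero_mul]
    · intro h; exact absurd (Finset.mem_univ _) h
  have hDskew : ∀ j j' : Fin n,
      D j j * Bt (Fin.castLE hmn j) j' = -(D j' j' * Bt (Fin.castLE hmn j') j) := by
    intro j j'
    rw [← hsingle j j', ← hsingle j' j]
    have e1 : ∀ (a b : Fin n), ∑ l, (Bt.transpose * Λ) a l * Bt l b
        = ∑ l, ∑ i, Bt i a * Λ i l * Bt l b := by
      intro a b
      apply Finset.sum_congr rfl; intro l _
      rw [Matrix.mul_apply, Finset.sum_mul]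
      simp [Matrix.transpose_apply]
    rw [e1, e1]
    calc ∑ l, ∑ i, Bt i j * Λ i l * Bt l j'
        = ∑ i, ∑ l, Bt i j * Λ i l * Bt l j' := Finset.sum_comm
      _ = ∑ i, ∑ l, -(Bt l j' * Λ l i * Bt i j) := by
          apply Finset.sum_congr rfl; intro i _
          apply Finset.sum_congr rfl; intro l _
          rw [hskew l i]; ring
      _ = -(∑ i, ∑ l, Bt l j' * Λ l i * Bt i j) := by
          simp [Finset.sum_neg_distrib]
  have hBkk : Bt (Fin.castLE hmn k) k = 0 := by
    have h0 : D k k * Bt (Fin.castLE hmn k) k = 0 := by linarith [hDskew k k]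
    exact (mul_eq_zero.1 h0).resolve_left (ne_of_gt (hDpos k))
  
  have hmaxid : ∀ x p : ℤ, max x 0 * p + x * max (-p) 0
      = max x 0 * max p 0 - max (-x) 0 * max (-p) 0 := by
    intro x p
    rcases le_total x 0 with hx | hx
    · rw [max_eq_right hx, max_eq_left (by linarith : (0:ℤ) ≤ -x)]
      ring
    · rw [max_eq_left hx, max_eq_right (by linarith : -x ≤ (0:ℤ))]
      rcases le_total p 0 with hp | hp
      · rw [max_eq_right hp, max_eq_left (by linarith : (0:ℤ) ≤ -p)]; ring
      · rw [max_eq_left hp, max_eq_right (by linarith : -p ≤ (0:ℤ))]; ring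
  have hmaxmul : ∀ d x : ℤ, 0 < d → d * max x 0 = max (d * x) 0 := by
    intro d x hd
    rcases le_total x 0 with hx | hx
    · rw [max_eq_right hx, max_eq_right (by nlinarith : d * x ≤ 0), mul_zero]
    · rw [max_eq_left hx, max_eq_left (by nlinarith : 0 ≤ d * x)]
  have mulG : ∀ (ν : ℕ) (M : Matrix (Fin ν) (Fin m) ℤ) (i : Fin ν) (l : Fin m),
      (M * auxE (Fin.castLE hmn k) (fun p => max (Bt p k) 0)) i l =
        if l = (Fin.castLE hmn k) then -(M i (Fin.castLE hmn k)) + ∑ q ∈ Finset.univ.erase (Fin.castLE hmn k), max (Bt q k) 0 * M i q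
        else M i l := by
    intro ν M i l; rw [mul_auxE]
  have Gmul : ∀ (ν : ℕ) (M : Matrix (Fin m) (Fin ν) ℤ) (i : Fin m) (l : Fin ν),
      (auxE (Fin.castLE hmn k) (fun p => max (Bt p k) 0) * M) i l =
        if i = (Fin.castLE hmn k) then -(M (Fin.castLE hmn k) l) else M i l + max (Bt i k) 0 * M (Fin.castLE hmn k) l := by
    intro ν M i l; rw [auxE_mul]
  have Hmul : ∀ (ν : ℕ) (M : Matrix (Fin n) (Fin ν) ℤ) (j : Fin n) (l : Fin ν),
      (auxE k (fun q => max (-(Bt (Fin.castLE hmn k) q)) 0) * M) j l =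
        if j = k then -(M k l) else M j l + max (-(Bt (Fin.castLE hmn k) j)) 0 * M k l := by
    intro ν M j l; rw [auxE_mul]
  have hMHT : ∀ (M : Matrix (Fin m) (Fin n) ℤ) (i : Fin m) (j : Fin n),
      (M * (auxE k (fun q => max (-(Bt (Fin.castLE hmn k) q)) 0)).transpose) i j =
        if j = k then -(M i k) else M i j + max (-(Bt (Fin.castLE hmn k) j)) 0 * M i k := by
    intro M i j
    have h1 : M * (auxE k (fun q => max (-(Bt (Fin.castLE hmn k) q)) 0)).transpose = (auxE k (fun q => max (-(Bt (Fin.castLE hmn k) q)) 0) * M.transpose).transpose := by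
      rw [Matrix.transpose_mul, Matrix.transpose_transpose]
    rw [h1, Matrix.transpose_apply, Hmul]
    rfl
  have hGtL : ∀ (i l : Fin m), ((auxE (Fin.castLE hmn k) (fun p => max (Bt p k) 0)).transpose * Λ) i l =
      if i = (Fin.castLE hmn k) then -(Λ (Fin.castLE hmn k) l) + ∑ q ∈ Finset.univ.erase (Fin.castLE hmn k), max (Bt q k) 0 * Λ q l
      else Λ i l := by
    intro i l
    have h1 : (auxE (Fin.castLE hmn k) (fun p => max (Bt p k) 0)).transpose * Λ = (Λ.transpose * auxE (Fin.castLE hmn k) (fun p => max (Bt p k) 0)).transpose := by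
      rw [Matrix.transpose_mul, Matrix.transpose_transpose]
    rw [h1, Matrix.transpose_apply, mulG]
    rfl
  have hBeq : Bt' = auxE (Fin.castLE hmn k) (fun p => max (Bt p k) 0) * Bt * (auxE k (fun q => max (-(Bt (Fin.castLE hmn k) q)) 0)).transpose := by
    ext i j
    rw [hBt' i j, hMHT]
    simp only [Gmul]
    by_cases hj : j = k
    · by_cases hi : i = (Fin.castLE hmn k) <;> simp [hi, hj, hBkk]
    · by_cases hi : i = (Fin.castLE hmn k)
      · simp [hi, hj, hBkk]
      · simp [hi, hj, hBkk]
        linarith [hmaxid (Bt i k) (Bt (Fin.castLE hmn k) j)]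
  have hLeq : Λ' = (auxE (Fin.castLE hmn k) (fun p => max (Bt p k) 0)).transpose * Λ * auxE (Fin.castLE hmn k) (fun p => max (Bt p k) 0) := by
    ext i l
    rw [mulG]
    by_cases hl : l = (Fin.castLE hmn k)
    · rw [if_pos hl, hl]
      by_cases hi : i = (Fin.castLE hmn k)
      · rw [hi, hΛ'₄, hGtL, if_pos rfl]
        have hLam0 : Λ (Fin.castLE hmn k) (Fin.castLE hmn k) = 0 := by linarith [hskew (Fin.castLE hmn k) (Fin.castLE hmn k)]
        have hcongr : ∀ q ∈ Finset.univ.erase (Fin.castLE hmn k),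
            max (Bt q k) 0 * (((auxE (Fin.castLE hmn k) (fun p => max (Bt p k) 0)).transpose * Λ) (Fin.castLE hmn k) q)
            = max (Bt q k) 0 * (-(Λ (Fin.castLE hmn k) q) + ∑ p ∈ Finset.univ.erase (Fin.castLE hmn k), max (Bt p k) 0 * Λ p q) := by
          intro q _; rw [hGtL, if_pos rfl]
        rw [Finset.sum_congr rfl hcongr]
        have hA : ∑ p ∈ Finset.univ.erase (Fin.castLE hmn k), max (Bt p k) 0 * Λ p (Fin.castLE hmn k)
            = -∑ q ∈ Finset.univ.erase (Fin.castLE hmn k), max (Bt q k) 0 * Λ (Fin.castLE hmn k) q := by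
          rw [← Finset.sum_neg_distrib]
          apply Finset.sum_congr rfl; intro p _
          rw [hskew (Fin.castLE hmn k) p]; ring
        have hB' : ∑ q ∈ Finset.univ.erase (Fin.castLE hmn k), max (Bt q k) 0 * -(Λ (Fin.castLE hmn k) q)
            = -∑ q ∈ Finset.univ.erase (Fin.castLE hmn k), max (Bt q k) 0 * Λ (Fin.castLE hmn k) q := by
          rw [← Finset.sum_neg_distrib]
          apply Finset.sum_congr rfl; intro q _; ring
        have hC : ∑ q ∈ Finset.univ.erase (Fin.castLE hmn k), ∑ p ∈ Finset.univ.erase (Fin.castLE hmn k),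
            max (Bt q k) 0 * (max (Bt p k) 0 * Λ p q) = 0 := by
          have h2 : (∑ q ∈ Finset.univ.erase (Fin.castLE hmn k), ∑ p ∈ Finset.univ.erase (Fin.castLE hmn k),
              max (Bt q k) 0 * (max (Bt p k) 0 * Λ p q))
              = -∑ q ∈ Finset.univ.erase (Fin.castLE hmn k), ∑ p ∈ Finset.univ.erase (Fin.castLE hmn k),
                max (Bt q k) 0 * (max (Bt p k) 0 * Λ p q) := by
            conv_lhs => rw [Finset.sum_comm]
            rw [← Finset.sum_neg_distrib]
            apply Finset.sum_congr rfl; intro p _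
            rw [← Finset.sum_neg_distrib]
            apply Finset.sum_congr rfl; intro q _
            rw [hskew q p]; ring
          linarith
        simp only [mul_add, Finset.mul_sum, Finset.sum_add_distrib]
        rw [hLam0]
        linarith [hA, hB', hC]
      · rw [hΛ'₂ i hi, hGtL]
        have hcongr : ∀ q ∈ Finset.univ.erase (Fin.castLE hmn k),
            max (Bt q k) 0 * (((auxE (Fin.castLE hmn k) (fun p => max (Bt p k) 0)).transpose * Λ) i q)
            = max (Bt q k) 0 * Λ i q := by
          intro q _; rw [hGtL, if_neg hi]
        rw [Finset.sum_congr rfl hcongr, if_neg hi]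
        rw [← Finset.add_sum_erase _ (fun l => max (Bt l k) 0 * Λ i l) (Finset.mem_univ (Fin.castLE hmn k)),
          hBkk]
        simp
    · rw [if_neg hl]
      by_cases hi : i = (Fin.castLE hmn k)
      · rw [hi, hΛ'₃ l hl, hΛ'₂ l hl, hGtL, if_pos rfl]
        rw [← Finset.add_sum_erase _ (fun q => max (Bt q k) 0 * Λ l q) (Finset.mem_univ (Fin.castLE hmn k)),
          hBkk]
        rw [hskew (Fin.castLE hmn k) l]
        have hsum : ∑ q ∈ Finset.univ.erase (Fin.castLE hmn k), max (Bt q k) 0 * Λ q l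
            = -∑ q ∈ Finset.univ.erase (Fin.castLE hmn k), max (Bt q k) 0 * Λ l q := by
          rw [← Finset.sum_neg_distrib]
          apply Finset.sum_congr rfl; intro q _
          rw [hskew l q]; ring
        rw [hsum]
        simp only [max_self, mul_zero, zero_sub]
        ring
      · rw [hΛ'₁ i l hi hl, hGtL, if_neg hi]
  have hG2 : (auxE (Fin.castLE hmn k) (fun p => max (Bt p k) 0)).transpose * (auxE (Fin.castLE hmn k) (fun p => max (Bt p k) 0)).transpose
      = (1 : Matrix (Fin m) (Fin m) ℤ) := by
    rw [← Matrix.transpose_mul, auxE_sq, Matrix.transpose_one]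
  have hfin : auxE k (fun q => max (-(Bt (Fin.castLE hmn k) q)) 0) * (Bt.transpose * Λ) * auxE (Fin.castLE hmn k) (fun p => max (Bt p k) 0) = Bt.transpose * Λ := by
    ext j l
    rw [mulG]
    by_cases hl : l = (Fin.castLE hmn k)
    · rw [if_pos hl, hl]
      by_cases hj : j = k
      · have hcongr : ∀ q ∈ Finset.univ.erase (Fin.castLE hmn k),
            max (Bt q k) 0 * (auxE k (fun q => max (-(Bt (Fin.castLE hmn k) q)) 0) * (Bt.transpose * Λ)) j q = 0 := by
          intro q hq
          rw [Hmul, if_pos hj, hP0 k q (Finset.ne_of_mem_erase hq), neg_zero, mul_zero]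
        rw [Finset.sum_congr rfl hcongr, Finset.sum_const_zero, add_zero, Hmul, if_pos hj,
          neg_neg, hj]
      · have hcongr : ∀ q ∈ Finset.univ.erase (Fin.castLE hmn k),
            max (Bt q k) 0 * (auxE k (fun q => max (-(Bt (Fin.castLE hmn k) q)) 0) * (Bt.transpose * Λ)) j q
            = if q = Fin.castLE hmn j then max (Bt q k) 0 * D j j else 0 := by
          intro q hq
          rw [Hmul, if_neg hj, hP0 k q (Finset.ne_of_mem_erase hq), mul_zero, add_zero]
          by_cases hqj : q = Fin.castLE hmn j
          · rw [if_pos hqj, hqj, hPd]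
          · rw [if_neg hqj, hP0 j q hqj, mul_zero]
        rw [Finset.sum_congr rfl hcongr,
          Finset.sum_ite_eq' _ (Fin.castLE hmn j) (fun q => max (Bt q k) 0 * D j j),
          if_pos (Finset.mem_erase.2 ⟨hcastne j k hj, Finset.mem_univ _⟩)]
        rw [Hmul, if_neg hj, hP0 j (Fin.castLE hmn k) (hcastne k j (fun h => hj h.symm)), hPd k]
        have e1 := hmaxmul (D j j) (Bt (Fin.castLE hmn j) k) (hDpos j)
        have e2 := hmaxmul (D k k) (-(Bt (Fin.castLE hmn k) j)) (hDpos k)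
        have e3 : D j j * Bt (Fin.castLE hmn j) k = D k k * -(Bt (Fin.castLE hmn k) j) := by
          linarith [hDskew j k]
        rw [e3] at e1
        linarith [e1, e2]
    · rw [if_neg hl]
      have hPl0 : (Bt.transpose * Λ) k l = 0 := hP0 k l hl
      rw [Hmul, hPl0]
      by_cases hj : j = k
      · rw [if_pos hj, hj, hPl0]
        simp
      · rw [if_neg hj, mul_zero, add_zero]
  have hmain : Bt'.transpose * Λ' = Bt.transpose * Λ := by
    rw [hBeq, hLeq, Matrix.transpose_mul, Matrix.transpose_mul, Matrix.transpose_transpose]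
    simp only [← Matrix.mul_assoc]
    rw [Matrix.mul_assoc (auxE k (fun q => max (-(Bt (Fin.castLE hmn k) q)) 0) * Bt.transpose)
      ((auxE (Fin.castLE hmn k) (fun p => max (Bt p k) 0)).transpose)
      ((auxE (Fin.castLE hmn k) (fun p => max (Bt p k) 0)).transpose), hG2, Matrix.mul_one,
      Matrix.mul_assoc (auxE k (fun q => max (-(Bt (Fin.castLE hmn k) q)) 0)) Bt.transpose Λ]
    exact hfin
  refine ⟨hmain, ?_, fun j l => by rw [hmain]; exact hcomp j l⟩
  rw [hLeq, Matrix.transpose_mul, Matrix.transpose_mul, Matrix.transpose_transpose, hΛ]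
  simp [Matrix.neg_mul, Matrix.mul_neg, Matrix.mul_assoc]
end

section
/- Let Z be a straight snake graph with 2s+1 tiles (s ≥ 0). (1) If P ≠ Q are perfect matchings of Z such that for every 1 ≤ i ≤ s, P contains both horizontal sides of the even tile G_{2i} if and only if Q does, then there exists 1 ≤ i ≤ s+1 such that both P and Q can twist on the odd tile G_{2i−1} and the set of sides of G_{2i−1} belonging to P differs from the set of sides of G_{2i−1} belonging to Q. (2) If P' ≠ Q' are perfect matchings of Z such that for every 1 ≤ i ≤ s+1, P' contains both horizontal sides of the odd tile G_{2i−1} if and only if Q' does, then there exists 1 ≤ i ≤ s such that both P' and Q' can twist on the even tile G_{2i} and the set of sides of G_{2i} belonging to P' differs from the set of sides of G_{2i} belonging to Q'. -/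
namespace StraightSnakeAux

def botE (x : ℤ) : LatticeEdge := ((x, 0), true)
def topE (x : ℤ) : LatticeEdge := ((x, 1), true)
def verE (x : ℤ) : LatticeEdge := ((x, 0), false)

variable {G : SnakeGraph}

lemma corner_eq (hstr : G.IsStraight) :
    ∀ i : ℕ, 1 ≤ i → i ≤ G.d → G.corner i = ((i : ℤ) - 1, 0) := by
  intro i
  induction i with
  | zero => omega
  | succ n ih =>
    intro h1 h2
    rcases Nat.eq_zero_or_pos n with rfl | hn
    · simpa using G.corner_one
    · have h := hstr n hn (by omega)
      rw [h, ih hn (by omega)]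
      push_cast
      congr 1
      ring

lemma tile_eq (hstr : G.IsStraight) (i : ℕ) (h1 : 1 ≤ i) (h2 : i ≤ G.d) :
    G.tile i = {botE ((i:ℤ)-1), topE ((i:ℤ)-1), verE ((i:ℤ)-1), verE (i:ℤ)} := by
  unfold SnakeGraph.tile tileSides southSide northSide westSide eastSide
  rw [corner_eq hstr i h1 h2]
  simp only [botE, topE, verE]
  norm_num

lemma mem_edges_iff (hstr : G.IsStraight) (e : LatticeEdge) :
    e ∈ G.edges ↔ ∃ i : ℕ, 1 ≤ i ∧ i ≤ G.d ∧
      e ∈ ({botE ((i:ℤ)-1), topE ((i:ℤ)-1), verE ((i:ℤ)-1), verE (i:ℤ)} : Set LatticeEdge) := by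
  simp only [SnakeGraph.edges, Set.mem_iUnion, Set.mem_Icc]
  constructor
  · rintro ⟨i, ⟨hi1, hi2⟩, h⟩
    exact ⟨i, hi1, hi2, (tile_eq hstr i hi1 hi2) ▸ h⟩
  · rintro ⟨i, hi1, hi2, h⟩
    exact ⟨i, ⟨hi1, hi2⟩, (tile_eq hstr i hi1 hi2) ▸ h⟩

lemma botE_mem_edges (hstr : G.IsStraight) (x : ℤ) :
    botE x ∈ G.edges ↔ 0 ≤ x ∧ x + 1 ≤ (G.d : ℤ) := by
  rw [mem_edges_iff hstr]
  constructor
  · rintro ⟨i, hi1, hi2, h⟩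
    simp only [Set.mem_insert_iff, Set.mem_singleton_iff, botE, topE, verE,
      Prod.mk.injEq] at h
    have : x = (i:ℤ) - 1 := by tauto
    subst this
    constructor <;> [omega; (push_cast; omega)]
  · rintro ⟨h0, h1⟩
    refine ⟨(x+1).toNat, by omega, by omega, ?_⟩
    simp only [Set.mem_insert_iff, Set.mem_singleton_iff, botE, topE, verE, Prod.mk.injEq]
    left
    exact ⟨⟨by omega, trivial⟩, trivial⟩

lemma topE_mem_edges (hstr : G.IsStraight) (x : ℤ) :
    topE x ∈ G.edges ↔ 0 ≤ x ∧ x + 1 ≤ (G.d : ℤ) := by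
  rw [mem_edges_iff hstr]
  constructor
  · rintro ⟨i, hi1, hi2, h⟩
    simp only [Set.mem_insert_iff, Set.mem_singleton_iff, botE, topE, verE,
      Prod.mk.injEq] at h
    have : x = (i:ℤ) - 1 := by tauto
    subst this
    constructor <;> [omega; (push_cast; omega)]
  · rintro ⟨h0, h1⟩
    refine ⟨(x+1).toNat, by omega, by omega, ?_⟩
    simp only [Set.mem_insert_iff, Set.mem_singleton_iff, botE, topE, verE, Prod.mk.injEq]
    right; left
    exact ⟨⟨by omega, trivial⟩, trivial⟩

lemma verE_mem_edges (hstr : G.IsStraight) (x : ℤ) :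
    verE x ∈ G.edges ↔ 0 ≤ x ∧ x ≤ (G.d : ℤ) := by
  rw [mem_edges_iff hstr]
  constructor
  · rintro ⟨i, hi1, hi2, h⟩
    simp only [Set.mem_insert_iff, Set.mem_singleton_iff, botE, topE, verE,
      Prod.mk.injEq] at h
    have : x = (i:ℤ) - 1 ∨ x = (i:ℤ) := by tauto
    rcases this with rfl | rfl <;> constructor <;> omega
  · rintro ⟨h0, h1⟩
    rcases eq_or_lt_of_le h0 with rfl | hpos
    · refine ⟨1, le_refl 1, G.one_le_d, ?_⟩
      simp only [Set.mem_insert_iff, Set.mem_singleton_iff, botE, topE, verE, Prod.mk.injEq]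
      right; right; left
      norm_num
    · refine ⟨x.toNat, by omega, by omega, ?_⟩
      simp only [Set.mem_insert_iff, Set.mem_singleton_iff, botE, topE, verE, Prod.mk.injEq]
      right; right; right
      exact ⟨⟨by omega, trivial⟩, trivial⟩

lemma edges_shape (hstr : G.IsStraight) {e : LatticeEdge} (he : e ∈ G.edges) :
    ∃ x : ℤ, e = botE x ∨ e = topE x ∨ e = verE x := by
  rw [mem_edges_iff hstr] at he
  obtain ⟨i, _, _, h⟩ := he
  simp only [Set.mem_insert_iff, Set.mem_singleton_iff] at h
  rcases h with rfl | rfl | rfl | rfl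
  · exact ⟨(i:ℤ)-1, Or.inl rfl⟩
  · exact ⟨(i:ℤ)-1, Or.inr (Or.inl rfl)⟩
  · exact ⟨(i:ℤ)-1, Or.inr (Or.inr rfl)⟩
  · exact ⟨(i:ℤ), Or.inr (Or.inr rfl)⟩

lemma mem_vertices (hstr : G.IsStraight) (x y : ℤ) (h0 : 0 ≤ x) (hxd : x ≤ (G.d : ℤ))
    (hy : y = 0 ∨ y = 1) : (x, y) ∈ G.vertices := by
  simp only [SnakeGraph.vertices, Set.mem_iUnion, Set.mem_Icc]
  rcases eq_or_lt_of_le h0 with rfl | hpos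
  · refine ⟨1, ⟨le_refl 1, G.one_le_d⟩, ?_⟩
    rw [corner_eq hstr 1 (le_refl 1) G.one_le_d]
    simp only [tileCorners, Set.mem_insert_iff, Set.mem_singleton_iff, Prod.mk.injEq]
    norm_num
    rcases hy with rfl | rfl <;> tauto
  · refine ⟨x.toNat, ⟨by omega, by omega⟩, ?_⟩
    rw [corner_eq hstr x.toNat (by omega) (by omega)]
    simp only [tileCorners, Set.mem_insert_iff, Set.mem_singleton_iff, Prod.mk.injEq]
    rcases hy with rfl | rfl
    · right; left; constructor <;> omega
    · right; right; right; constructor <;> omega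


variable {G : SnakeGraph} {P Q : Set LatticeEdge}

lemma mem_endpoints_botE (x z : ℤ) : (x, (0:ℤ)) ∈ endpointsOf (botE z) ↔ x = z ∨ x = z + 1 := by
  simp [endpointsOf, botE, Prod.ext_iff]

lemma mem_endpoints_topE (x z : ℤ) : (x, (1:ℤ)) ∈ endpointsOf (topE z) ↔ x = z ∨ x = z + 1 := by
  simp [endpointsOf, topE, Prod.ext_iff]

lemma mem_endpoints_verE (x z : ℤ) : (x, (0:ℤ)) ∈ endpointsOf (verE z) ↔ x = z := by
  simp [endpointsOf, verE, Prod.ext_iff]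

lemma mem_endpoints_verE' (x z : ℤ) : (x, (1:ℤ)) ∈ endpointsOf (verE z) ↔ x = z := by
  simp [endpointsOf, verE, Prod.ext_iff]

lemma vertexBot (hstr : G.IsStraight) (hm : G.IsPerfectMatching P) (x : ℤ)
    (h0 : 0 ≤ x) (hxd : x ≤ (G.d : ℤ)) :
    (verE x ∈ P ∨ botE (x - 1) ∈ P ∨ botE x ∈ P) ∧
      (verE x ∈ P → botE (x - 1) ∉ P) ∧ (verE x ∈ P → botE x ∉ P) ∧
      (botE (x - 1) ∈ P → botE x ∉ P) := by
  obtain ⟨e, ⟨heP, hev⟩, huniq⟩ := hm.2 (x, 0) (mem_vertices hstr x 0 h0 hxd (Or.inl rfl))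
  have hcand : e = verE x ∨ e = botE (x - 1) ∨ e = botE x := by
    obtain ⟨z, hz⟩ := edges_shape hstr (hm.1 heP)
    rcases hz with rfl | rfl | rfl
    · rw [mem_endpoints_botE] at hev
      rcases hev with rfl | h
      · right; right; rfl
      · have hz : z = x - 1 := by omega
        right; left; rw [hz]
    · exfalso; simp [endpointsOf, topE, Prod.ext_iff] at hev
    · rw [mem_endpoints_verE] at hev; subst hev; left; rfl
  have hvx : (x, (0:ℤ)) ∈ endpointsOf (verE x) := (mem_endpoints_verE x x).2 rfl
  have hbl : (x, (0:ℤ)) ∈ endpointsOf (botE (x - 1)) := (mem_endpoints_botE x (x-1)).2 (by omega)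
  have hbr : (x, (0:ℤ)) ∈ endpointsOf (botE x) := (mem_endpoints_botE x x).2 (Or.inl rfl)
  refine ⟨?_, ?_, ?_, ?_⟩
  · rcases hcand with rfl | rfl | rfl
    · exact Or.inl heP
    · exact Or.inr (Or.inl heP)
    · exact Or.inr (Or.inr heP)
  · intro h1 h2
    have e1 := huniq _ ⟨h1, hvx⟩
    have e2 := huniq _ ⟨h2, hbl⟩
    rw [← e2] at e1
    simp [verE, botE] at e1
  · intro h1 h2
    have e1 := huniq _ ⟨h1, hvx⟩
    have e2 := huniq _ ⟨h2, hbr⟩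
    rw [← e2] at e1
    simp [verE, botE] at e1
  · intro h1 h2
    have e1 := huniq _ ⟨h1, hbl⟩
    have e2 := huniq _ ⟨h2, hbr⟩
    rw [← e2] at e1
    simp [botE, Prod.ext_iff] at e1

lemma vertexTop (hstr : G.IsStraight) (hm : G.IsPerfectMatching P) (x : ℤ)
    (h0 : 0 ≤ x) (hxd : x ≤ (G.d : ℤ)) :
    (verE x ∈ P ∨ topE (x - 1) ∈ P ∨ topE x ∈ P) ∧
      (verE x ∈ P → topE (x - 1) ∉ P) ∧ (verE x ∈ P → topE x ∉ P) ∧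
      (topE (x - 1) ∈ P → topE x ∉ P) := by
  obtain ⟨e, ⟨heP, hev⟩, huniq⟩ := hm.2 (x, 1) (mem_vertices hstr x 1 h0 hxd (Or.inr rfl))
  have hcand : e = verE x ∨ e = topE (x - 1) ∨ e = topE x := by
    obtain ⟨z, hz⟩ := edges_shape hstr (hm.1 heP)
    rcases hz with rfl | rfl | rfl
    · exfalso; simp [endpointsOf, botE, Prod.ext_iff] at hev
    · rw [mem_endpoints_topE] at hev
      rcases hev with rfl | h
      · right; right; rfl
      · have hz : z = x - 1 := by omega
        right; left; rw [hz]
    · rw [mem_endpoints_verE'] at hev; subst hev; left; rfl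
  have hvx : (x, (1:ℤ)) ∈ endpointsOf (verE x) := (mem_endpoints_verE' x x).2 rfl
  have hbl : (x, (1:ℤ)) ∈ endpointsOf (topE (x - 1)) := (mem_endpoints_topE x (x-1)).2 (by omega)
  have hbr : (x, (1:ℤ)) ∈ endpointsOf (topE x) := (mem_endpoints_topE x x).2 (Or.inl rfl)
  refine ⟨?_, ?_, ?_, ?_⟩
  · rcases hcand with rfl | rfl | rfl
    · exact Or.inl heP
    · exact Or.inr (Or.inl heP)
    · exact Or.inr (Or.inr heP)
  · intro h1 h2
    have e1 := huniq _ ⟨h1, hvx⟩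
    have e2 := huniq _ ⟨h2, hbl⟩
    rw [← e2] at e1
    simp [verE, topE] at e1
  · intro h1 h2
    have e1 := huniq _ ⟨h1, hvx⟩
    have e2 := huniq _ ⟨h2, hbr⟩
    rw [← e2] at e1
    simp [verE, topE] at e1
  · intro h1 h2
    have e1 := huniq _ ⟨h1, hbl⟩
    have e2 := huniq _ ⟨h2, hbr⟩
    rw [← e2] at e1
    simp [topE, Prod.ext_iff] at e1

lemma pair_nat (hstr : G.IsStraight) (hm : G.IsPerfectMatching P) :
    ∀ n : ℕ, (botE n ∈ P ↔ topE n ∈ P) := by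
  intro n
  induction n with
  | zero =>
    have hB := vertexBot hstr hm 0 le_rfl (by exact_mod_cast Nat.zero_le G.d)
    have hT := vertexTop hstr hm 0 le_rfl (by exact_mod_cast Nat.zero_le G.d)
    have hnb : botE ((0:ℤ) - 1) ∉ P := fun h => by
      have := (botE_mem_edges hstr _).1 (hm.1 h); omega
    have hnt : topE ((0:ℤ) - 1) ∉ P := fun h => by
      have := (topE_mem_edges hstr _).1 (hm.1 h); omega
    push_cast
    constructor
    · intro h
      have hv : verE 0 ∉ P := fun hv => hB.2.2.1 hv h
      tauto
    · intro h
      have hv : verE 0 ∉ P := fun hv => hT.2.2.1 hv h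
      tauto
  | succ n ih =>
    by_cases hrange : ((n:ℤ) + 1) + 1 ≤ (G.d : ℤ)
    · have hB := vertexBot hstr hm ((n:ℤ)+1) (by omega) (by omega)
      have hT := vertexTop hstr hm ((n:ℤ)+1) (by omega) (by omega)
      have hs : ((n:ℤ) + 1) - 1 = (n:ℤ) := by ring
      rw [hs] at hB hT
      push_cast
      constructor
      · intro h
        have hv : verE ((n:ℤ)+1) ∉ P := fun hv => hB.2.2.1 hv h
        have hbn : botE (n:ℤ) ∉ P := fun hb => hB.2.2.2 hb h
        have htn : topE (n:ℤ) ∉ P := fun ht => hbn (ih.2 ht)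
        tauto
      · intro h
        have hv : verE ((n:ℤ)+1) ∉ P := fun hv => hT.2.2.1 hv h
        have htn : topE (n:ℤ) ∉ P := fun ht => hT.2.2.2 ht h
        have hbn : botE (n:ℤ) ∉ P := fun hb => htn (ih.1 hb)
        tauto
    · constructor
      · intro h
        exfalso
        have := (botE_mem_edges hstr _).1 (hm.1 h); push_cast at this; omega
      · intro h
        exfalso
        have := (topE_mem_edges hstr _).1 (hm.1 h); push_cast at this; omega

lemma pair_int (hstr : G.IsStraight) (hm : G.IsPerfectMatching P) (x : ℤ) :
    botE x ∈ P ↔ topE x ∈ P := by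
  rcases lt_or_ge x 0 with hx | hx
  · constructor
    · intro h; exfalso; have := (botE_mem_edges hstr _).1 (hm.1 h); omega
    · intro h; exfalso; have := (topE_mem_edges hstr _).1 (hm.1 h); omega
  · have : x = ((x.toNat : ℕ) : ℤ) := by omega
    rw [this]
    exact pair_nat hstr hm x.toNat

lemma ver_iff (hstr : G.IsStraight) (hm : G.IsPerfectMatching P) (x : ℤ)
    (h0 : 0 ≤ x) (hxd : x ≤ (G.d : ℤ)) :
    verE x ∈ P ↔ (botE (x - 1) ∉ P ∧ botE x ∉ P) := by
  have hB := vertexBot hstr hm x h0 hxd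
  constructor
  · intro h; exact ⟨hB.2.1 h, hB.2.2.1 h⟩
  · rintro ⟨h1, h2⟩
    rcases hB.1 with h | h | h
    · exact h
    · exact absurd h h1
    · exact absurd h h2

lemma matching_subset (hstr : G.IsStraight) (hP : G.IsPerfectMatching P)
    (hQ : G.IsPerfectMatching Q) (h : ∀ x : ℤ, botE x ∈ P ↔ botE x ∈ Q) : P ⊆ Q := by
  intro e he
  obtain ⟨x, hx⟩ := edges_shape hstr (hP.1 he)
  rcases hx with rfl | rfl | rfl
  · exact (h x).1 he
  · exact (pair_int hstr hQ x).1 ((h x).1 ((pair_int hstr hP x).2 he))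
  · have hb := (verE_mem_edges hstr x).1 (hP.1 he)
    have hv := (ver_iff hstr hP x hb.1 hb.2).1 he
    exact (ver_iff hstr hQ x hb.1 hb.2).2
      ⟨fun hq => hv.1 ((h _).2 hq), fun hq => hv.2 ((h _).2 hq)⟩

lemma exists_diff (hstr : G.IsStraight) (hP : G.IsPerfectMatching P)
    (hQ : G.IsPerfectMatching Q) (hne : P ≠ Q) :
    ∃ x : ℤ, 0 ≤ x ∧ x + 1 ≤ (G.d : ℤ) ∧ ¬(botE x ∈ P ↔ botE x ∈ Q) := by
  by_contra hcon
  push_neg at hcon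
  apply hne
  have hall : ∀ x : ℤ, botE x ∈ P ↔ botE x ∈ Q := by
    intro x
    by_cases hr : 0 ≤ x ∧ x + 1 ≤ (G.d : ℤ)
    · exact hcon x hr.1 hr.2
    · constructor
      · intro hp; exfalso
        have := (botE_mem_edges hstr _).1 (hP.1 hp); tauto
      · intro hq; exfalso
        have := (botE_mem_edges hstr _).1 (hQ.1 hq); tauto
  exact Set.Subset.antisymm (matching_subset hstr hP hQ hall)
    (matching_subset hstr hQ hP (fun x => (hall x).symm))

lemma twist_core (hstr : G.IsStraight) (hP : G.IsPerfectMatching P)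
    (hQ : G.IsPerfectMatching Q) (x : ℤ) (i : ℕ) (hi1 : 1 ≤ i) (hid : i ≤ G.d)
    (hix : (i : ℤ) = x + 1) (hxP : botE x ∈ P) (hxQ : botE x ∉ Q)
    (hl : botE (x - 1) ∈ P ↔ botE (x - 1) ∈ Q)
    (hr : botE (x + 1) ∈ P ↔ botE (x + 1) ∈ Q) :
    G.CanTwist P i ∧ G.CanTwist Q i ∧ P ∩ G.tile i ≠ Q ∩ G.tile i := by
  have hbe := (botE_mem_edges hstr x).1 (hP.1 hxP)
  have h0 : 0 ≤ x := hbe.1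
  have hxd : x + 1 ≤ (G.d : ℤ) := hbe.2
  have hBx := vertexBot hstr hP x h0 (by omega)
  have hBx1 := vertexBot hstr hP (x + 1) (by omega) (by omega)
  have hs : (x + 1) - 1 = x := by ring
  rw [hs] at hBx1
  have hQx := vertexBot hstr hQ x h0 (by omega)
  have hQx1 := vertexBot hstr hQ (x + 1) (by omega) (by omega)
  rw [hs] at hQx1
  -- P facts
  have hPvx : verE x ∉ P := fun hv => hBx.2.2.1 hv hxP
  have hPvx1 : verE (x + 1) ∉ P := fun hv => hBx1.2.1 hv hxP
  have hPbl : botE (x - 1) ∉ P := fun hb => hBx.2.2.2 hb hxP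
  have hPbr : botE (x + 1) ∉ P := fun hb => hBx1.2.2.2 hxP hb
  have hPt : topE x ∈ P := (pair_int hstr hP x).1 hxP
  -- Q facts
  have hQbl : botE (x - 1) ∉ Q := fun hb => hPbl (hl.2 hb)
  have hQbr : botE (x + 1) ∉ Q := fun hb => hPbr (hr.2 hb)
  have hQvx : verE x ∈ Q := by rcases hQx.1 with h | h | h <;> tauto
  have hQvx1 : verE (x + 1) ∈ Q := by rcases hQx1.1 with h | h | h <;> tauto
  have hQt : topE x ∉ Q := fun ht => hxQ ((pair_int hstr hQ x).2 ht)
  -- tile computation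
  have hic : (i : ℤ) - 1 = x := by omega
  have htile : G.tile i = {botE x, topE x, verE x, verE (x + 1)} := by
    rw [tile_eq hstr i hi1 hid, hic, hix]
  have hPtile : P ∩ G.tile i = {botE x, topE x} := by
    rw [htile]
    ext e
    simp only [Set.mem_inter_iff, Set.mem_insert_iff, Set.mem_singleton_iff]
    constructor
    · rintro ⟨heP, rfl | rfl | rfl | rfl⟩
      · exact Or.inl rfl
      · exact Or.inr rfl
      · exact absurd heP hPvx
      · exact absurd heP hPvx1
    · rintro (rfl | rfl)
      · exact ⟨hxP, Or.inl rfl⟩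
      · exact ⟨hPt, Or.inr (Or.inl rfl)⟩
  have hQtile : Q ∩ G.tile i = {verE x, verE (x + 1)} := by
    rw [htile]
    ext e
    simp only [Set.mem_inter_iff, Set.mem_insert_iff, Set.mem_singleton_iff]
    constructor
    · rintro ⟨heQ, rfl | rfl | rfl | rfl⟩
      · exact absurd heQ hxQ
      · exact absurd heQ hQt
      · exact Or.inl rfl
      · exact Or.inr rfl
    · rintro (rfl | rfl)
      · exact ⟨hQvx, Or.inr (Or.inr (Or.inl rfl))⟩
      · exact ⟨hQvx1, Or.inr (Or.inr (Or.inr rfl))⟩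
  refine ⟨⟨hi1, hid, ?_⟩, ⟨hi1, hid, ?_⟩, ?_⟩
  · rw [hPtile]
    exact Set.ncard_pair (by simp [botE, topE])
  · rw [hQtile]
    exact Set.ncard_pair (by simp [verE, Prod.ext_iff])
  · rw [hPtile, hQtile]
    intro hcontr
    have : botE x ∈ ({verE x, verE (x+1)} : Set LatticeEdge) := by
      rw [← hcontr]; exact Or.inl rfl
    rcases this with h | h <;> simp [botE, verE] at h



lemma north_eq (hstr : G.IsStraight) (m : ℕ) (h1 : 1 ≤ m) (h2 : m ≤ G.d) :
    northSide (G.corner m) = topE ((m:ℤ)-1) := by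
  rw [corner_eq hstr m h1 h2]
  simp [northSide, topE]

lemma south_eq (hstr : G.IsStraight) (m : ℕ) (h1 : 1 ≤ m) (h2 : m ≤ G.d) :
    southSide (G.corner m) = botE ((m:ℤ)-1) := by
  rw [corner_eq hstr m h1 h2]
  simp [southSide, botE]

lemma hag_to_bot (hstr : G.IsStraight) (hP : G.IsPerfectMatching P)
    (hQ : G.IsPerfectMatching Q) (y : ℤ)
    (h : (topE y ∈ P ∧ botE y ∈ P) ↔ (topE y ∈ Q ∧ botE y ∈ Q)) :
    botE y ∈ P ↔ botE y ∈ Q := by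
  have p1 := pair_int hstr hP y
  have p2 := pair_int hstr hQ y
  tauto
end StraightSnakeAux

open StraightSnakeAux

/-- In a straight snake graph with `2s+1` tiles: (1) two distinct perfect
matchings agreeing, on every even tile, on whether both horizontal sides
belong to them, differ on some odd tile, on which both can twist; (2) dually
with the roles of even and odd tiles exchanged. -/

theorem straight_snake_differ_on_tile
    (G : SnakeGraph) (s : ℕ) (hd : G.d = 2 * s + 1) (hstr : G.IsStraight) :
    (∀ P Q, G.IsPerfectMatching P → G.IsPerfectMatching Q → P ≠ Q →
      (∀ i, 1 ≤ i → i ≤ s →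
        ((northSide (G.corner (2 * i)) ∈ P ∧ southSide (G.corner (2 * i)) ∈ P) ↔
          (northSide (G.corner (2 * i)) ∈ Q ∧ southSide (G.corner (2 * i)) ∈ Q))) →
      ∃ i, 1 ≤ i ∧ i ≤ s + 1 ∧
        G.CanTwist P (2 * i - 1) ∧ G.CanTwist Q (2 * i - 1) ∧
        P ∩ G.tile (2 * i - 1) ≠ Q ∩ G.tile (2 * i - 1)) ∧
    (∀ P Q, G.IsPerfectMatching P → G.IsPerfectMatching Q → P ≠ Q →
      (∀ i, 1 ≤ i → i ≤ s + 1 →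
        ((northSide (G.corner (2 * i - 1)) ∈ P ∧ southSide (G.corner (2 * i - 1)) ∈ P) ↔
          (northSide (G.corner (2 * i - 1)) ∈ Q ∧ southSide (G.corner (2 * i - 1)) ∈ Q))) →
      ∃ i, 1 ≤ i ∧ i ≤ s ∧
        G.CanTwist P (2 * i) ∧ G.CanTwist Q (2 * i) ∧
        P ∩ G.tile (2 * i) ≠ Q ∩ G.tile (2 * i)) := by
  constructor
  · -- Part 1
    intro P Q hP hQ hne hagree
    obtain ⟨x, hx0, hx1, hxne⟩ := exists_diff hstr hP hQ hne
    rw [hd] at hx1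
    push_cast at hx1
    have habot : ∀ k : ℕ, 1 ≤ k → k ≤ s →
        (botE (2*(k:ℤ)-1) ∈ P ↔ botE (2*(k:ℤ)-1) ∈ Q) := by
      intro k h1 h2
      have hm1 : 1 ≤ 2 * k := by omega
      have hm2 : 2 * k ≤ G.d := by omega
      have h := hagree k h1 h2
      rw [north_eq hstr (2*k) hm1 hm2, south_eq hstr (2*k) hm1 hm2] at h
      have hc : ((2*k : ℕ) : ℤ) - 1 = 2*(k:ℤ)-1 := by push_cast; ring
      rw [hc] at h
      exact hag_to_bot hstr hP hQ _ h
    rcases Int.even_or_odd x with ⟨k, hk⟩ | ⟨k, hk⟩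
    · -- x = 2k even: produce witness
      have hk0 : 0 ≤ k := by omega
      have hks : k ≤ (s:ℤ) := by omega
      refine ⟨k.toNat + 1, by omega, by omega, ?_⟩
      have hcast : ((2 * (k.toNat + 1) - 1 : ℕ) : ℤ) = x + 1 := by
        push_cast [Nat.cast_sub] <;> omega
      have hl : botE (x - 1) ∈ P ↔ botE (x - 1) ∈ Q := by
        rcases eq_or_lt_of_le hk0 with rfl | hkpos
        · constructor
          · intro h; exfalso
            have := (botE_mem_edges hstr _).1 (hP.1 h); omega
          · intro h; exfalso
            have := (botE_mem_edges hstr _).1 (hQ.1 h); omega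
        · have := habot k.toNat (by omega) (by omega)
          have hc : 2*((k.toNat : ℕ) : ℤ) - 1 = x - 1 := by omega
          rwa [hc] at this
      have hr : botE (x + 1) ∈ P ↔ botE (x + 1) ∈ Q := by
        rcases eq_or_lt_of_le hks with rfl | hks'
        · constructor
          · intro h; exfalso
            have := (botE_mem_edges hstr _).1 (hP.1 h); rw [hd] at this
            push_cast at this; omega
          · intro h; exfalso
            have := (botE_mem_edges hstr _).1 (hQ.1 h); rw [hd] at this
            push_cast at this; omega
        · have := habot (k.toNat + 1) (by omega) (by omega)
          have hc : 2*((k.toNat + 1 : ℕ) : ℤ) - 1 = x + 1 := by push_cast; omega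
          rwa [hc] at this
      have hi1 : 1 ≤ 2 * (k.toNat + 1) - 1 := by omega
      have hid : 2 * (k.toNat + 1) - 1 ≤ G.d := by omega
      by_cases hp : botE x ∈ P
      · have hq : botE x ∉ Q := fun hq => hxne (iff_of_true hp hq)
        exact twist_core hstr hP hQ x _ hi1 hid hcast hp hq hl hr
      · have hq : botE x ∈ Q := by
          by_contra hq
          exact hxne (iff_of_false hp hq)
        obtain ⟨c1, c2, hne'⟩ :=
          twist_core hstr hQ hP x _ hi1 hid hcast hq hp hl.symm hr.symm
        exact ⟨c2, c1, hne'.symm⟩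
    · -- x = 2k+1 odd: contradiction
      exfalso
      have hk0 : 0 ≤ k := by omega
      have := habot (k.toNat + 1) (by omega) (by omega)
      have hc : 2*((k.toNat + 1 : ℕ) : ℤ) - 1 = x := by push_cast; omega
      rw [hc] at this
      exact hxne this
  · -- Part 2
    intro P Q hP hQ hne hagree
    obtain ⟨x, hx0, hx1, hxne⟩ := exists_diff hstr hP hQ hne
    rw [hd] at hx1
    push_cast at hx1
    have habot : ∀ k : ℕ, 1 ≤ k → k ≤ s + 1 →
        (botE (2*(k:ℤ)-2) ∈ P ↔ botE (2*(k:ℤ)-2) ∈ Q) := by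
      intro k h1 h2
      have hm1 : 1 ≤ 2 * k - 1 := by omega
      have hm2 : 2 * k - 1 ≤ G.d := by omega
      have h := hagree k h1 h2
      rw [north_eq hstr (2*k-1) hm1 hm2, south_eq hstr (2*k-1) hm1 hm2] at h
      have hc : ((2*k - 1 : ℕ) : ℤ) - 1 = 2*(k:ℤ)-2 := by
        push_cast [Nat.cast_sub] <;> omega
      rw [hc] at h
      exact hag_to_bot hstr hP hQ _ h
    rcases Int.even_or_odd x with ⟨k, hk⟩ | ⟨k, hk⟩
    · -- x = 2k even: contradiction
      exfalso
      have hk0 : 0 ≤ k := by omega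
      have := habot (k.toNat + 1) (by omega) (by omega)
      have hc : 2*((k.toNat + 1 : ℕ) : ℤ) - 2 = x := by push_cast; omega
      rw [hc] at this
      exact hxne this
    · -- x = 2k+1 odd: witness
      have hk0 : 0 ≤ k := by omega
      have hks : k ≤ (s:ℤ) - 1 := by omega
      refine ⟨k.toNat + 1, by omega, by omega, ?_⟩
      have hcast : ((2 * (k.toNat + 1) : ℕ) : ℤ) = x + 1 := by push_cast; omega
      have hl : botE (x - 1) ∈ P ↔ botE (x - 1) ∈ Q := by
        have := habot (k.toNat + 1) (by omega) (by omega)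
        have hc : 2*((k.toNat + 1 : ℕ) : ℤ) - 2 = x - 1 := by push_cast; omega
        rwa [hc] at this
      have hr : botE (x + 1) ∈ P ↔ botE (x + 1) ∈ Q := by
        have := habot (k.toNat + 2) (by omega) (by omega)
        have hc : 2*((k.toNat + 2 : ℕ) : ℤ) - 2 = x + 1 := by push_cast; omega
        rwa [hc] at this
      have hi1 : 1 ≤ 2 * (k.toNat + 1) := by omega
      have hid : 2 * (k.toNat + 1) ≤ G.d := by omega
      by_cases hp : botE x ∈ P
      · have hq : botE x ∉ Q := fun hq => hxne (iff_of_true hp hq)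
        exact twist_core hstr hP hQ x _ hi1 hid hcast hp hq hl hr
      · have hq : botE x ∈ Q := by
          by_contra hq
          exact hxne (iff_of_false hp hq)
        obtain ⟨c1, c2, hne'⟩ :=
          twist_core hstr hQ hP x _ hi1 hid hcast hq hp hl.symm hr.symm
        exact ⟨c2, c1, hne'.symm⟩
end
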